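/- arXiv:hep-th/9709164 — 9 statements merged into one kernel-verified Lean document; each statement's English description precedes it below -/
import Mathlib

section
/- Let X_* be a chain complex with differential l_1 acyclic in positive degrees, with a contracting homotopy ρ in positive degrees (l_1 ρ + ρ l_1 = Id on elements of degree > 0). Suppose l_2 : X_0 ∧ X_0 → X_0 satisfies l_2(l_1 y, x) = 0 for all y ∈ X_1, x ∈ X_0 (condition (1) holds with zero right-hand side), and the Jacobi expression J(x_1,x_2,x_3) = l_2(l_2(x_1,x_2),x_3) + cyclic lies in the image of l_1 for all x_i ∈ X_0. Extend l_2 by zero to all elements of positive resolution degree. Then there exists a trilinear map l_3 of degree +1 with l_3 vanishing in positive resolution degree such that l_1 l_3 + l_2 ∘ l_2 = 0 on degree-zero triples, and moreover l_3 composed with the coderivation extension of l_2 vanishes, so that the maps (l_1, l_2, l_3, 0, 0, ...) satisfy all the sh Lie (L_∞) relations. -/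
/-!
Take `l3 := -ρ ∘ J`, where `J` is the Jacobiator of `l2`. Because `J` is `l1`-exact and `l1 ∘ ρ`
is the identity on boundaries (by the homotopy formula and `l1 ∘ l1 = 0`), `l1 ∘ l3 = -J`;
skew-symmetry of `l3` is that of `J`. For the last relation, skew-symmetry of `l2` alone turns the
unshuffle sum of `J` into an alternating sum of terms `l2 (J x y z) w`, which vanish because
`J x y z` is a boundary and `l2` kills boundaries; applying `-ρ` gives the relation for `l3`.
-/

section Jacobiator

variable {R M N P : Type*} [CommRing R] [AddCommGroup M] [Module R M]
  [AddCommGroup N] [Module R N] [AddCommGroup P] [Module R P]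

def jacobiator (β : M →ₗ[R] M →ₗ[R] M) : M →ₗ[R] M →ₗ[R] M →ₗ[R] M :=
  LinearMap.mk₂ R (fun a b => β (β a b) + β.flip a ∘ₗ β b + β.flip b ∘ₗ β.flip a)
    (fun _ _ _ => by
      ext
      simp only [map_add, LinearMap.add_apply, LinearMap.comp_apply, LinearMap.flip_apply]
      abel)
    (fun _ _ _ => by
      ext
      simp only [map_smul, LinearMap.add_apply, LinearMap.smul_apply, LinearMap.comp_apply,
        LinearMap.flip_apply, smul_add])
    (fun _ _ _ => by
      ext
      simp only [map_add, LinearMap.add_apply, LinearMap.comp_apply, LinearMap.flip_apply]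
      abel)
    (fun _ _ _ => by
      ext
      simp only [map_smul, LinearMap.add_apply, LinearMap.smul_apply, LinearMap.comp_apply,
        LinearMap.flip_apply, smul_add])

/-- The composite of a trilinear map `T` with the coderivation extension of the bracket `β`,
evaluated on four degree-zero elements: a sum over the (2,2)-unshuffles with Koszul signs. -/
def compCoderivation (β : M →ₗ[R] M →ₗ[R] M) (T : M →ₗ[R] M →ₗ[R] M →ₗ[R] N)
    (x₁ x₂ x₃ x₄ : M) : N :=
  T (β x₁ x₂) x₃ x₄ - T (β x₁ x₃) x₂ x₄ + T (β x₁ x₄) x₂ x₃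
    + T (β x₂ x₃) x₁ x₄ - T (β x₂ x₄) x₁ x₃ + T (β x₃ x₄) x₁ x₂

variable (β : M →ₗ[R] M →ₗ[R] M)

theorem jacobiator_apply (a b c : M) :
    jacobiator β a b c = β (β a b) c + β (β b c) a + β (β c a) b := rfl

theorem compCoderivation_compr₂_llcomp (T : M →ₗ[R] M →ₗ[R] M →ₗ[R] N) (f : N →ₗ[R] P)
    (x₁ x₂ x₃ x₄ : M) :
    compCoderivation β (T.compr₂ (LinearMap.llcomp R M N P f)) x₁ x₂ x₃ x₄
      = f (compCoderivation β T x₁ x₂ x₃ x₄) := by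
  simp only [compCoderivation, LinearMap.compr₂_apply, LinearMap.llcomp_apply, map_add, map_sub]

variable {β} (hβ : ∀ x y, β x y = -β y x)
include hβ

theorem jacobiator_swap₁₂ (a b c : M) : jacobiator β b a c = -jacobiator β a b c := by
  simp only [jacobiator_apply, hβ b a, hβ a c, hβ c b, map_neg, LinearMap.neg_apply]
  abel

theorem jacobiator_swap₂₃ (a b c : M) : jacobiator β a c b = -jacobiator β a b c := by
  simp only [jacobiator_apply, hβ a c, hβ c b, hβ b a, map_neg, LinearMap.neg_apply]
  abel

theorem compCoderivation_jacobiator (x₁ x₂ x₃ x₄ : M) :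
    compCoderivation β (jacobiator β) x₁ x₂ x₃ x₄
      = β (jacobiator β x₁ x₂ x₃) x₄ - β (jacobiator β x₁ x₂ x₄) x₃
        + β (jacobiator β x₁ x₃ x₄) x₂ - β (jacobiator β x₂ x₃ x₄) x₁ := by
  simp only [compCoderivation, jacobiator_apply, map_add, LinearMap.add_apply]
  simp only [hβ x₃ x₁, hβ x₄ x₁, hβ x₄ x₂,
    hβ x₄ (β x₁ x₂), hβ x₄ (β x₁ x₃), hβ x₃ (β x₁ x₄),
    hβ x₄ (β x₂ x₃), hβ x₃ (β x₂ x₄), hβ x₂ (β x₃ x₄),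
    hβ (β x₃ x₄) (β x₁ x₂), hβ (β x₂ x₄) (β x₁ x₃),
    hβ (β x₂ x₃) (β x₁ x₄), map_neg, LinearMap.neg_apply]
  abel

end Jacobiator

theorem apply_homotopy_eq_self_of_mem_range {R X₀ X₁ X₂ : Type*} [CommRing R]
    [AddCommGroup X₀] [Module R X₀] [AddCommGroup X₁] [Module R X₁]
    [AddCommGroup X₂] [Module R X₂] {d₁ : X₁ →ₗ[R] X₀} {d₂ : X₂ →ₗ[R] X₁}
    {h₀ : X₀ →ₗ[R] X₁} {h₁ : X₁ →ₗ[R] X₂} (hdd : ∀ z, d₁ (d₂ z) = 0)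
    (hhtpy : ∀ y, d₂ (h₁ y) + h₀ (d₁ y) = y) {x : X₀} (hx : x ∈ LinearMap.range d₁) :
    d₁ (h₀ x) = x := by
  obtain ⟨y, rfl⟩ := hx
  conv_rhs => rw [← hhtpy y]
  rw [map_add, hdd, zero_add]

theorem stmt1
    (X : ℕ → Type) [∀ i, AddCommGroup (X i)] [∀ i, Module ℝ (X i)]
    (l1 : ∀ i, X (i + 1) →ₗ[ℝ] X i)
    (hdd : ∀ i (x : X (i + 2)), l1 i (l1 (i + 1) x) = 0)
    (ρ : ∀ i, X i →ₗ[ℝ] X (i + 1))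
    (hhtpy : ∀ i (x : X (i + 1)), l1 (i + 1) (ρ (i + 1) x) + ρ i (l1 i x) = x)
    (l2 : X 0 →ₗ[ℝ] X 0 →ₗ[ℝ] X 0)
    (hskew : ∀ x y : X 0, l2 x y = - l2 y x)
    (h1 : ∀ (y : X 1) (x : X 0), l2 (l1 0 y) x = 0)
    (hJ : ∀ x1 x2 x3 : X 0, ∃ y : X 1,
      l2 (l2 x1 x2) x3 + l2 (l2 x2 x3) x1 + l2 (l2 x3 x1) x2 = l1 0 y) :
    ∃ l3 : X 0 →ₗ[ℝ] X 0 →ₗ[ℝ] X 0 →ₗ[ℝ] X 1,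
      (∀ x1 x2 x3 : X 0,
        l3 x1 x2 x3 = - l3 x2 x1 x3 ∧ l3 x1 x2 x3 = - l3 x1 x3 x2) ∧
      (∀ x1 x2 x3 : X 0,
        l1 0 (l3 x1 x2 x3)
          + (l2 (l2 x1 x2) x3 + l2 (l2 x2 x3) x1 + l2 (l2 x3 x1) x2) = 0) ∧
      (∀ x1 x2 x3 x4 : X 0,
        l3 (l2 x1 x2) x3 x4 - l3 (l2 x1 x3) x2 x4 + l3 (l2 x1 x4) x2 x3
          + l3 (l2 x2 x3) x1 x4 - l3 (l2 x2 x4) x1 x3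
          + l3 (l2 x3 x4) x1 x2 = 0) := by
  have hJ_range : ∀ a b c, jacobiator l2 a b c ∈ LinearMap.range (l1 0) := fun a b c =>
    let ⟨y, hy⟩ := hJ a b c; ⟨y, hy.symm⟩
  have hl2_J : ∀ a b c d, l2 (jacobiator l2 a b c) d = 0 := fun a b c d => by
    obtain ⟨y, hy⟩ := hJ_range a b c
    rw [← hy, h1]
  let l3 := (jacobiator l2).compr₂ (LinearMap.llcomp ℝ (X 0) (X 0) (X 1) (-ρ 0))
  have hl3 : ∀ a b c, l3 a b c = -ρ 0 (jacobiator l2 a b c) := fun _ _ _ => rfl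
  refine ⟨l3, fun a b c => ⟨?_, ?_⟩, fun a b c => ?_, fun a b c d => ?_⟩
  · rw [hl3, hl3, jacobiator_swap₁₂ hskew a b c, map_neg, neg_neg]
  · rw [hl3, hl3, jacobiator_swap₂₃ hskew a b c, map_neg, neg_neg]
  · rw [hl3, map_neg, apply_homotopy_eq_self_of_mem_range (hdd 0) (hhtpy 0) (hJ_range a b c)]
    exact neg_add_cancel _
  · change compCoderivation l2 l3 a b c d = 0
    rw [compCoderivation_compr₂_llcomp, compCoderivation_jacobiator hskew, hl2_J, hl2_J, hl2_J,
      hl2_J, sub_zero, add_zero, sub_zero, map_zero]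
end

section
/- Let X_* be a chain complex with differential l_1 acyclic in positive degrees, with contracting homotopy ρ (so l_1 ρ + ρ l_1 = Id in positive degrees). Let d be a coderivation on the graded symmetric coalgebra ΛsX_* determined by a map of resolution degree k > 0, and suppose [l̂_1, d̂] = 0 where l̂_1 is the coderivation extension of l_1 and [·,·] is the graded commutator. Then there exists a coderivation t̂ of resolution degree k+1 with d̂ = [l̂_1, t̂]. -/
theorem stmt2_general
    (X : ℕ → Type) [∀ i, AddCommGroup (X i)] [∀ i, Module ℝ (X i)]
    (M : ℕ → Type) [∀ i, AddCommGroup (M i)] [∀ i, Module ℝ (M i)]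
    (l1 : ∀ r, X (r + 1) →ₗ[ℝ] X r)
    (ρ : ∀ r, X r →ₗ[ℝ] X (r + 1))
    (hhtpy : ∀ r (x : X (r + 1)), l1 (r + 1) (ρ (r + 1) x) + ρ r (l1 r x) = x)
    (k : ℕ)
    (D : ∀ r, M (r + 1) →ₗ[ℝ] M r)
    (d : ∀ r, M r →ₗ[ℝ] X (k + r))
    (hcocycle : ∀ r (ξ : M (r + 1)), l1 (k + r) (d (r + 1) ξ) = d r (D r ξ)) :
    ∃ t : ∀ r, M r →ₗ[ℝ] X (k + r + 1),
      (∀ r (ξ : M r), t r ξ = ρ (k + r) (d r ξ)) ∧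
      (∀ r (ξ : M (r + 1)),
        d (r + 1) ξ = l1 (k + r + 1) (t (r + 1) ξ) + t r (D r ξ)) := by
  refine ⟨fun r => (ρ (k + r)).comp (d r), fun _ _ => rfl, fun r ξ => ?_⟩
  calc d (r + 1) ξ
      = l1 (k + r + 1) (ρ (k + r + 1) (d (r + 1) ξ)) + ρ (k + r) (l1 (k + r) (d (r + 1) ξ)) :=
        (hhtpy (k + r) (d (r + 1) ξ)).symm
    _ = l1 (k + r + 1) (ρ (k + r + 1) (d (r + 1) ξ)) + ρ (k + r) (d r (D r ξ)) := by
        rw [hcocycle]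

theorem stmt2
    (X : ℕ → Type) [∀ i, AddCommGroup (X i)] [∀ i, Module ℝ (X i)]
    (M : ℕ → Type) [∀ i, AddCommGroup (M i)] [∀ i, Module ℝ (M i)]
    (l1 : ∀ r, X (r + 1) →ₗ[ℝ] X r)
    (hdd : ∀ r (x : X (r + 2)), l1 r (l1 (r + 1) x) = 0)
    (ρ : ∀ r, X r →ₗ[ℝ] X (r + 1))
    (hhtpy : ∀ r (x : X (r + 1)), l1 (r + 1) (ρ (r + 1) x) + ρ r (l1 r x) = x)
    (k : ℕ) (hk : 0 < k)
    (D : ∀ r, M (r + 1) →ₗ[ℝ] M r)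
    (d : ∀ r, M r →ₗ[ℝ] X (k + r))
    (hcocycle : ∀ r (ξ : M (r + 1)), l1 (k + r) (d (r + 1) ξ) = d r (D r ξ)) :
    ∃ t : ∀ r, M r →ₗ[ℝ] X (k + r + 1),
      (∀ r (ξ : M r), t r ξ = ρ (k + r) (d r ξ)) ∧
      (∀ r (ξ : M (r + 1)),
        d (r + 1) ξ = l1 (k + r + 1) (t (r + 1) ξ) + t r (D r ξ)) :=
  stmt2_general X M l1 ρ hhtpy k D d hcocycle
end

section
/- On the polynomial algebra Loc in variables x^i (i = 1,...,n) and u^a_I (a = 1,...,k, I a multi-index), the Euler-Lagrange operator δ/δu^a defined by δL/δu^a = Σ_I (-D)_I (∂L/∂u^a_I), where D_i = ∂/∂x^i + Σ u^a_{Ii} ∂/∂u^a_I are the total derivatives, annihilates total divergences: for all local functions R^i, δ(D_i R^i)/δu^a = 0 for every a. -/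
/-!
STATEMENT 4.  `Loc n F` is the algebra of (polynomial) local functions in the
base coordinates `x^i` (`i : Fin n`) and the jet coordinates `u^a_I`
(`a : F`, `I` a symmetric multi-index, i.e. a multiset of base indices).
`Dtot i` is the total derivative `D_i = ∂/∂x^i + Σ u^a_{Ii} ∂/∂u^a_I`,
`DI I` is the composite `D_I`, and the Euler–Lagrange operator is
`δL/δu^a = Σ_I (-D)_I (∂L/∂u^a_I)`.  The theorem: the Euler–Lagrange
operator annihilates total divergences `D_i R^i`.
-/

open MvPolynomial

/-- Jet variables: base coordinates `x^i` and jet coordinates `u^a_I`. -/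
abbrev JVar (n : ℕ) (F : Type) := Fin n ⊕ (F × Multiset (Fin n))

/-- Local functions. -/
abbrev Loc (n : ℕ) (F : Type) := MvPolynomial (JVar n F) ℝ

/-- Total derivative `D_i = ∂/∂x^i + Σ_{a,I} u^a_{Ii} ∂/∂u^a_I`. -/
noncomputable def Dtot {n : ℕ} {F : Type} [DecidableEq F]
    (i : Fin n) (f : Loc n F) : Loc n F :=
  pderiv (Sum.inl i) f +
    ∑ v ∈ f.vars,
      match v with
      | Sum.inl _ => 0
      | Sum.inr (a, I) => X (Sum.inr (a, i ::ₘ I)) * pderiv v f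

/-- Iterated total derivative `D_I` (the `D_i` commute, so any ordering of the
multi-index gives the same operator). -/
noncomputable def DI {n : ℕ} {F : Type} [DecidableEq F]
    (I : Multiset (Fin n)) (f : Loc n F) : Loc n F :=
  I.toList.foldr Dtot f

/-- Euler–Lagrange derivative `δf/δu^a = Σ_I (-D)_I (∂f/∂u^a_I)`. -/
noncomputable def EL {n : ℕ} {F : Type} [DecidableEq F]
    (a : F) (f : Loc n F) : Loc n F :=
  ∑ᶠ I : Multiset (Fin n),
    ((-1 : ℝ) ^ Multiset.card I) • DI I (pderiv (Sum.inr (a, I)) f)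

/-- Total divergence `D_i R^i`. -/
noncomputable def Divg {n : ℕ} {F : Type} [DecidableEq F]
    (R : Fin n → Loc n F) : Loc n F :=
  ∑ i, Dtot i (R i)


/-!
Realise `D_i` as the derivation `∂/∂x^i + Σ u^a_{Ii} ∂/∂u^a_I` of the polynomial algebra.
Total derivatives commute, so `D_I` depends only on the multiset `I`, and
`[∂/∂u^c_I, D_i] = ∂/∂u^c_{I∖i}` when `i ∈ I` (and `0` otherwise). Hence the `I`-th term of
`δ(D_i f)/δu^c` is `(-1)^|I| D_{iI} ∂f/∂u^c_I`, plus, when `I = iJ`, the term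
`(-1)^{|J|+1} D_{iJ} ∂f/∂u^c_J`; after reindexing the two families cancel. Linearity of
`δ/δu^c` then handles `D_i R^i`.
-/

namespace MvPolynomial

variable {R σ : Type*} [CommSemiring R]

theorem derivation_eq_sum_vars_mul_pderiv [DecidableEq σ]
    (D : Derivation R (MvPolynomial σ R) (MvPolynomial σ R)) (f : MvPolynomial σ R) :
    D f = ∑ v ∈ f.vars, D (X v) * pderiv v f := by
  set D' : Derivation R (MvPolynomial σ R) (MvPolynomial σ R) :=
    ∑ v ∈ f.vars, D (X v) • pderiv v
  have hD' (g : MvPolynomial σ R) : D' g = ∑ v ∈ f.vars, D (X v) * pderiv v g := by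
    rw [← Derivation.coeFnAddMonoidHom_apply, map_sum, Finset.sum_apply]
    rfl
  rw [← hD']
  refine derivation_eq_of_forall_mem_vars fun w hw => ?_
  simp [hD', pderiv_X, Pi.single_apply, hw]

theorem finite_support_pderiv_comp {ι : Type*} {e : ι → σ} (he : Function.Injective e)
    (f : MvPolynomial σ R) : (Function.support fun i => pderiv (e i) f).Finite :=
  (f.vars.finite_toSet.preimage he.injOn).subset fun _ hi =>
    by_contra (hi ∘ pderiv_eq_zero_of_notMem_vars)

end MvPolynomial

namespace Multiset

theorem cons_eq_iff {α : Type*} [DecidableEq α] {a : α} {s t : Multiset α} :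
    a ::ₘ s = t ↔ a ∈ t ∧ s = t.erase a := by
  rw [← singleton_add, add_comm, add_singleton_eq_iff]

end Multiset

theorem finsum_ite_mem_erase {α M : Type*} [DecidableEq α] [AddCommMonoid M] (a : α)
    (g : Multiset α → M) : ∑ᶠ I : Multiset α, (if a ∈ I then g (I.erase a) else 0) = ∑ᶠ J, g J := by
  have hrange : Set.range (a ::ₘ ·) = {I | a ∈ I} :=
    Set.ext fun I => ⟨by rintro ⟨J, rfl⟩; exact Multiset.mem_cons_self a J,
      fun h => ⟨I.erase a, Multiset.cons_erase h⟩⟩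
  calc ∑ᶠ I : Multiset α, (if a ∈ I then g (I.erase a) else 0)
      = ∑ᶠ I ∈ Set.range (a ::ₘ ·), g (I.erase a) := by
        rw [hrange, finsum_mem_def]
        simp only [Set.indicator_apply, Set.mem_ofPred_eq]
    _ = ∑ᶠ J, g J := by
        rw [finsum_mem_range fun _ _ => (Multiset.cons_inj_right a).mp]
        simp only [Multiset.erase_cons_head]

section TotalDerivation

variable {n : ℕ} {F : Type} [DecidableEq F]

noncomputable def totalDerivation (i : Fin n) : Derivation ℝ (Loc n F) (Loc n F) :=
  pderiv (Sum.inl i) + mkDerivation ℝ (Sum.elim 0 fun p => X (Sum.inr (p.1, i ::ₘ p.2)))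

theorem Dtot_eq_totalDerivation (i : Fin n) (f : Loc n F) : Dtot i f = totalDerivation i f := by
  rw [Dtot, totalDerivation, Derivation.add_apply,
    derivation_eq_sum_vars_mul_pderiv (mkDerivation ℝ _) f]
  congr 1
  refine Finset.sum_congr rfl fun v _ => ?_
  rcases v with j | ⟨a, I⟩ <;> simp [mkDerivation_X]

@[simp]
theorem totalDerivation_X_inl (i j : Fin n) :
    totalDerivation i (X (Sum.inl j) : Loc n F) = if j = i then 1 else 0 := by
  simp [totalDerivation, mkDerivation_X, pderiv_X, Pi.single_apply]

@[simp]
theorem totalDerivation_X_inr (i : Fin n) (a : F) (I : Multiset (Fin n)) :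
    totalDerivation i (X (Sum.inr (a, I)) : Loc n F) = X (Sum.inr (a, i ::ₘ I)) := by
  simp [totalDerivation, mkDerivation_X, pderiv_X]

theorem totalDerivation_comm (i j : Fin n) (f : Loc n F) :
    totalDerivation i (totalDerivation j f) = totalDerivation j (totalDerivation i f) := by
  have h : ⁅totalDerivation (F := F) i, totalDerivation (F := F) j⁆ = 0 := by
    refine derivation_ext fun v => ?_
    rcases v with l | ⟨a, I⟩
    · simp only [Derivation.commutator_apply, totalDerivation_X_inl]
      split_ifs <;> simp
    · simp [Derivation.commutator_apply, Multiset.cons_swap]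
  simpa [Derivation.commutator_apply, sub_eq_zero] using congrArg (· f) h

theorem commutator_pderiv_totalDerivation (c : F) (I : Multiset (Fin n)) (i : Fin n) :
    ⁅(pderiv (Sum.inr (c, I)) : Derivation ℝ (Loc n F) (Loc n F)), totalDerivation i⁆ =
      if i ∈ I then pderiv (Sum.inr (c, I.erase i)) else 0 := by
  refine derivation_ext fun v => ?_
  rcases v with l | ⟨b, J⟩
  · simp only [Derivation.commutator_apply, totalDerivation_X_inl]
    split_ifs <;> simp [pderiv_X]
  · by_cases hi : i ∈ I <;> by_cases hJ : b = c ∧ J = I <;>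
      simp [Derivation.commutator_apply, pderiv_X, Pi.single_apply, hi, hJ, Multiset.cons_eq_iff]

theorem pderiv_totalDerivation (c : F) (I : Multiset (Fin n)) (i : Fin n) (f : Loc n F) :
    pderiv (Sum.inr (c, I)) (totalDerivation i f) =
      totalDerivation i (pderiv (Sum.inr (c, I)) f) +
        if i ∈ I then pderiv (Sum.inr (c, I.erase i)) f else 0 := by
  have h := congrArg (· f) (commutator_pderiv_totalDerivation c I i)
  by_cases hi : i ∈ I <;>
    simpa [Derivation.commutator_apply, hi, sub_eq_iff_eq_add'] using h

instance : LeftCommutative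
    fun (i : Fin n) (L : Loc n F →ₗ[ℝ] Loc n F) => (totalDerivation i).toLinearMap ∘ₗ L :=
  ⟨fun i j L => LinearMap.ext fun f => totalDerivation_comm i j (L f)⟩

noncomputable def iteratedTotalDerivation (I : Multiset (Fin n)) : Loc n F →ₗ[ℝ] Loc n F :=
  I.foldr (fun i L => (totalDerivation i).toLinearMap ∘ₗ L) LinearMap.id

theorem iteratedTotalDerivation_cons (i : Fin n) (I : Multiset (Fin n)) (f : Loc n F) :
    iteratedTotalDerivation (i ::ₘ I) f = totalDerivation i (iteratedTotalDerivation I f) := by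
  simp [iteratedTotalDerivation]

theorem iteratedTotalDerivation_totalDerivation (I : Multiset (Fin n)) (i : Fin n)
    (f : Loc n F) :
    iteratedTotalDerivation I (totalDerivation i f) = iteratedTotalDerivation (i ::ₘ I) f := by
  induction I using Multiset.induction_on with
  | empty => simp [iteratedTotalDerivation]
  | cons j I ih =>
    rw [iteratedTotalDerivation_cons, ih, Multiset.cons_swap, iteratedTotalDerivation_cons,
      iteratedTotalDerivation_cons, iteratedTotalDerivation_cons, totalDerivation_comm]

theorem DI_eq_iteratedTotalDerivation (I : Multiset (Fin n)) (f : Loc n F) :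
    DI I f = iteratedTotalDerivation I f := by
  rw [DI, iteratedTotalDerivation]
  conv_rhs => rw [← Multiset.coe_toList I, Multiset.coe_foldr]
  induction I.toList with
  | nil => rfl
  | cons i l ih => simp [ih, Dtot_eq_totalDerivation]

end TotalDerivation

section EulerLagrange

variable {n : ℕ} {F : Type} [DecidableEq F]

theorem EL_eq_finsum (c : F) (f : Loc n F) :
    EL c f = ∑ᶠ I, ((-1 : ℝ) ^ Multiset.card I) •
      iteratedTotalDerivation I (pderiv (Sum.inr (c, I)) f) := by
  simp only [EL, DI_eq_iteratedTotalDerivation]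

theorem finite_support_EL_summand (c : F) (J : Multiset (Fin n) → Multiset (Fin n))
    (f : Loc n F) :
    (Function.support fun I => ((-1 : ℝ) ^ Multiset.card I) •
      iteratedTotalDerivation (J I) (pderiv (Sum.inr (c, I)) f)).Finite :=
  (finite_support_pderiv_comp (Sum.inr_injective.comp (Prod.mk_right_injective c)) f).subset
    fun I hI h => hI (by simp_all)

theorem EL_sum {ι : Type*} (c : F) (s : Finset ι) (g : ι → Loc n F) :
    EL c (∑ j ∈ s, g j) = ∑ j ∈ s, EL c (g j) := by
  simp only [EL_eq_finsum, map_sum, Finset.smul_sum]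
  exact (sum_finsum_comm s _ fun j _ => finite_support_EL_summand c id (g j)).symm

theorem EL_totalDerivation (c : F) (i : Fin n) (f : Loc n F) :
    EL c (totalDerivation i f) = 0 := by
  set A : Multiset (Fin n) → Loc n F := fun I => ((-1 : ℝ) ^ Multiset.card I) •
    iteratedTotalDerivation (i ::ₘ I) (pderiv (Sum.inr (c, I)) f)
  have hA : (Function.support A).Finite := finite_support_EL_summand c (i ::ₘ ·) f
  have hB : (Function.support fun I : Multiset (Fin n) =>
      if i ∈ I then -A (I.erase i) else 0).Finite :=
    (hA.image (i ::ₘ ·)).subset fun I hI => by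
      by_cases hi : i ∈ I
      · exact ⟨I.erase i, by simpa [hi] using hI, Multiset.cons_erase hi⟩
      · simp [hi] at hI
  have hsplit : ∀ I, ((-1 : ℝ) ^ Multiset.card I) •
      iteratedTotalDerivation I (pderiv (Sum.inr (c, I)) (totalDerivation i f)) =
      A I + if i ∈ I then -A (I.erase i) else 0 := fun I => by
    rw [pderiv_totalDerivation, map_add, smul_add, iteratedTotalDerivation_totalDerivation]
    congr 1
    split_ifs with hi
    · simp only [A, Multiset.cons_erase hi, ← neg_smul]
      rw [← Multiset.card_erase_add_one hi, pow_succ]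
      simp
    · simp
  rw [EL_eq_finsum, finsum_congr hsplit, finsum_add_distrib hA hB,
    finsum_ite_mem_erase i fun J => -A J, finsum_neg_distrib, add_neg_cancel]

end EulerLagrange

theorem stmt4 (n k : ℕ) (R : Fin n → Loc n (Fin k)) (a : Fin k) :
    EL a (Divg R) = 0 := by
  simp only [Divg, Dtot_eq_totalDerivation, EL_sum, EL_totalDerivation, Finset.sum_const_zero]
end

section
/- Let ω^{ab} = ω^{abI} D_I be a matrix of total differential operators with coefficients in local functions that is skew-adjoint, i.e., ω^{abI} D_I f = -(-D)_I(ω^{baI} f) for all local functions f. Define the bracket on local n-forms by {L_1 ν, L_2 ν} = (1/2)[ω^{ab}(δL_1/δu^a)·(δL_2/δu^b) − ω^{ab}(δL_2/δu^a)·(δL_1/δu^b)] ν. Then for any local (n-1)-form R, {d_H R, L ν} is d_H-exact; consequently the bracket descends to a well-defined skew-symmetric bracket on the quotient space F = Ω^n / d_H Ω^{n-1} of local functionals. -/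
/-!
STATEMENT 6.  `ω^{ab} = ω^{abI} D_I` is a matrix of total differential
operators with local-function coefficients (finitely many nonzero `ω^{abI}`
for each `a,b`), skew-adjoint in the sense
`ω^{abI} D_I f = -(-D)_I (ω^{baI} f)` for all local functions `f`.
The bracket on local `n`-forms `L ν` (identified with their coefficient
functions) is
`{L1 ν, L2 ν} = (1/2)[ω^{ab}(δL1/δu^a)(δL2/δu^b) - (1 ↔ 2)] ν`.
Then `{d_H R, L ν}` and `{L ν, d_H R}` are `d_H`-exact (a total divergence),
and the bracket is skew, hence it descends to a well-defined skew-symmetric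
bracket on the space `F = Ωⁿ / d_H Ω^{n-1}` of local functionals.
-/

open MvPolynomial

/-- A total differential operator `ω^I D_I` applied to a local function. -/
noncomputable def opApply {n : ℕ} {F : Type} [DecidableEq F]
    (w : Multiset (Fin n) → Loc n F) (f : Loc n F) : Loc n F :=
  ∑ᶠ I : Multiset (Fin n), w I * DI I f

/-- The bracket `{L1 ν, L2 ν}` determined by the operator matrix `ω`. -/
noncomputable def brkt {n k : ℕ}
    (ω : Fin k → Fin k → Multiset (Fin n) → Loc n (Fin k))
    (L1 L2 : Loc n (Fin k)) : Loc n (Fin k) :=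
  (1 / 2 : ℝ) •
    ∑ a, ∑ b,
      (opApply (ω a b) (EL a L1) * EL b L2 -
        opApply (ω a b) (EL a L2) * EL b L1)

/-! ### Auxiliary lemmas -/

section Aux

variable {n : ℕ} {F : Type} [DecidableEq F]

/-- Coefficient of the total derivative in front of `pderiv v`. -/
noncomputable def cc (i : Fin n) (v : JVar n F) : Loc n F :=
  Sum.elim (fun _ => 0) (fun p => X (Sum.inr (p.1, i ::ₘ p.2))) v

theorem Dtot_eq_sum (i : Fin n) (f : Loc n F) (s : Finset (JVar n F))
    (hs : f.vars ⊆ s) :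
    Dtot i f = pderiv (Sum.inl i) f + ∑ v ∈ s, cc i v * pderiv v f := by
  unfold Dtot
  congr 1
  rw [← Finset.sum_subset hs (fun v _ hv => by
    rw [pderiv_eq_zero_of_notMem_vars hv, mul_zero])]
  refine Finset.sum_congr rfl fun v _ => ?_
  rcases v with j | ⟨a, I⟩ <;> simp [cc]

theorem Dtot_zero (i : Fin n) : Dtot i (0 : Loc n F) = 0 := by
  rw [Dtot_eq_sum i 0 ∅ (by simp)]
  simp

theorem Dtot_C (i : Fin n) (r : ℝ) : Dtot i (C r : Loc n F) = 0 := by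
  rw [Dtot_eq_sum i (C r) ∅ (by simp [vars_C])]
  simp [pderiv_C]

theorem Dtot_one (i : Fin n) : Dtot i (1 : Loc n F) = 0 := by
  simpa using Dtot_C i 1

theorem Dtot_add (i : Fin n) (f g : Loc n F) :
    Dtot i (f + g) = Dtot i f + Dtot i g := by
  classical
  set s := f.vars ∪ g.vars ∪ (f + g).vars with hsdef
  rw [Dtot_eq_sum i f s (by intro v hv; simp [hsdef, hv]),
    Dtot_eq_sum i g s (by intro v hv; simp [hsdef, hv]),
    Dtot_eq_sum i (f + g) s (by intro v hv; simp [hsdef, hv])]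
  simp only [map_add, mul_add, Finset.sum_add_distrib]
  ring_nf

theorem Dtot_mul (i : Fin n) (f g : Loc n F) :
    Dtot i (f * g) = Dtot i f * g + f * Dtot i g := by
  classical
  set s := f.vars ∪ g.vars ∪ (f * g).vars with hsdef
  rw [Dtot_eq_sum i f s (by intro v hv; simp [hsdef, hv]),
    Dtot_eq_sum i g s (by intro v hv; simp [hsdef, hv]),
    Dtot_eq_sum i (f * g) s (by intro v hv; simp [hsdef, hv]),
    (by rfl : (MvPolynomial.pderiv (Sum.inl i)) (f * g) = (MvPolynomial.pderiv (Sum.inl i)) (f * g))]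
  have hsum : (∑ v ∈ s, cc i v * pderiv v (f * g)) =
      (∑ v ∈ s, cc i v * pderiv v f) * g + f * ∑ v ∈ s, cc i v * pderiv v g := by
    rw [Finset.sum_mul, Finset.mul_sum, ← Finset.sum_add_distrib]
    refine Finset.sum_congr rfl fun v _ => ?_
    rw [pderiv_mul]
    ring
  rw [hsum, pderiv_mul]
  ring

theorem pdX (u w : JVar n F) :
    pderiv u (X w : Loc n F) = if w = u then 1 else 0 := by
  by_cases h : w = u
  · subst h; simp
  · simp [pderiv_X_of_ne h, h]

theorem Dtot_X_inl (i j : Fin n) :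
    Dtot i (X (Sum.inl j) : Loc n F) = if (Sum.inl j : JVar n F) = Sum.inl i then 1 else 0 := by
  rw [Dtot_eq_sum i _ {Sum.inl j} (by simp [vars_X]), Finset.sum_singleton, pdX]
  simp [cc]

theorem Dtot_X_inr (i : Fin n) (a : F) (I : Multiset (Fin n)) :
    Dtot i (X (Sum.inr (a, I)) : Loc n F) = X (Sum.inr (a, i ::ₘ I)) := by
  rw [Dtot_eq_sum i _ {Sum.inr (a, I)} (by simp [vars_X]), Finset.sum_singleton, pdX, pdX]
  simp [cc]

theorem Dtot_ite (i : Fin n) (c : Prop) [Decidable c] :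
    Dtot i (if c then (1 : Loc n F) else 0) = 0 := by
  split <;> simp [Dtot_one, Dtot_zero]

theorem Dtot_comm_X (i j : Fin n) (v : JVar n F) :
    Dtot i (Dtot j (X v : Loc n F)) = Dtot j (Dtot i (X v)) := by
  rcases v with m | ⟨a, I⟩
  · rw [Dtot_X_inl, Dtot_X_inl, Dtot_ite, Dtot_ite]
  · rw [Dtot_X_inr, Dtot_X_inr, Dtot_X_inr, Dtot_X_inr, Multiset.cons_swap]

theorem Dtot_comm (i j : Fin n) (f : Loc n F) :
    Dtot i (Dtot j f) = Dtot j (Dtot i f) := by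
  induction f using MvPolynomial.induction_on with
  | C r => rw [Dtot_C, Dtot_C, Dtot_zero, Dtot_zero]
  | add p q hp hq => simp only [Dtot_add, hp, hq]
  | mul_X p v hp =>
      simp only [Dtot_mul, Dtot_add]
      rw [hp, Dtot_comm_X]
      ring

theorem pderiv_Dtot_X (a : F) (I : Multiset (Fin n)) (i : Fin n) (v : JVar n F) :
    pderiv (Sum.inr (a, I)) (Dtot i (X v : Loc n F)) =
      Dtot i (pderiv (Sum.inr (a, I)) (X v)) +
        (if i ∈ I then pderiv (Sum.inr (a, I.erase i)) (X v : Loc n F) else 0) := by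
  rcases v with m | ⟨b, J⟩
  · rw [Dtot_X_inl]
    have h1 : pderiv (Sum.inr (a, I)) (X (Sum.inl m) : Loc n F) = 0 := by simp [pdX]
    have h2 : pderiv (Sum.inr (a, I.erase i)) (X (Sum.inl m) : Loc n F) = 0 := by simp [pdX]
    rw [h1, h2, Dtot_zero]
    split <;> simp [pderiv_C, pderiv_one]
  · rw [Dtot_X_inr, pdX, pdX, pdX, Dtot_ite]
    by_cases hI : i ∈ I
    · by_cases hb : b = a
      · subst hb
        by_cases hJ : J = I.erase i
        · subst hJ
          have : (Sum.inr (b, i ::ₘ I.erase i) : JVar n F) = Sum.inr (b, I) := by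
            rw [Multiset.cons_erase hI]
          simp [this, hI]
        · have h1 : (Sum.inr (b, i ::ₘ J) : JVar n F) ≠ Sum.inr (b, I) := by
            intro h
            apply hJ
            simp only [Sum.inr.injEq, Prod.mk.injEq, true_and] at h
            rw [← h, Multiset.erase_cons_head]
          have h2 : (Sum.inr (b, J) : JVar n F) ≠ Sum.inr (b, I.erase i) := by
            simpa using hJ
          simp [h1, h2, hI]
      · have h1 : (Sum.inr (b, i ::ₘ J) : JVar n F) ≠ Sum.inr (a, I) := by simp [hb]
        have h2 : (Sum.inr (b, J) : JVar n F) ≠ Sum.inr (a, I.erase i) := by simp [hb]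
        simp [h1, h2, hI]
    · have h1 : (Sum.inr (b, i ::ₘ J) : JVar n F) ≠ Sum.inr (a, I) := by
        intro h
        simp only [Sum.inr.injEq, Prod.mk.injEq] at h
        exact hI (h.2 ▸ Multiset.mem_cons_self i J)
      simp [h1, hI]

theorem pderiv_Dtot (a : F) (I : Multiset (Fin n)) (i : Fin n) (f : Loc n F) :
    pderiv (Sum.inr (a, I)) (Dtot i f) =
      Dtot i (pderiv (Sum.inr (a, I)) f) +
        (if i ∈ I then pderiv (Sum.inr (a, I.erase i)) f else 0) := by
  induction f using MvPolynomial.induction_on with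
  | C r => rw [Dtot_C, pderiv_C, Dtot_zero, map_zero]; split <;> simp [pderiv_C]
  | add p q hp hq =>
      rw [Dtot_add, map_add, map_add, hp, hq, map_add, Dtot_add]
      split <;> ring
  | mul_X p v hp =>
      rw [Dtot_mul, map_add, pderiv_mul, pderiv_mul, hp, pderiv_Dtot_X]
      by_cases hc : i ∈ I
      · simp only [if_pos hc, pderiv_mul, Dtot_mul, Dtot_add]
        ring
      · simp only [if_neg hc, pderiv_mul, Dtot_mul, Dtot_add]
        ring

theorem foldr_Dtot_zero (l : List (Fin n)) :
    l.foldr (Dtot (F := F)) 0 = 0 := by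
  induction l with
  | nil => rfl
  | cons i l ih => simp only [List.foldr_cons, ih, Dtot_zero]

theorem foldr_Dtot_add (l : List (Fin n)) (f g : Loc n F) :
    l.foldr Dtot (f + g) = l.foldr Dtot f + l.foldr Dtot g := by
  induction l with
  | nil => rfl
  | cons i l ih => simp only [List.foldr_cons, ih, Dtot_add]

instance : LeftCommutative (Dtot (n := n) (F := F)) :=
  ⟨fun i j f => Dtot_comm i j f⟩

theorem foldr_Dtot_perm {l₁ l₂ : List (Fin n)} (h : l₁.Perm l₂) (f : Loc n F) :
    l₁.foldr Dtot f = l₂.foldr Dtot f :=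
  h.foldr_eq f

theorem DI_zero (I : Multiset (Fin n)) : DI I (0 : Loc n F) = 0 :=
  foldr_Dtot_zero _

theorem DI_add (I : Multiset (Fin n)) (f g : Loc n F) :
    DI I (f + g) = DI I f + DI I g :=
  foldr_Dtot_add _ _ _

theorem DI_cons (i : Fin n) (I : Multiset (Fin n)) (f : Loc n F) :
    DI (i ::ₘ I) f = Dtot i (DI I f) := by
  have hperm : (i ::ₘ I).toList.Perm (i :: I.toList) := by
    rw [← Multiset.coe_eq_coe, Multiset.coe_toList, ← Multiset.cons_coe, Multiset.coe_toList]
  unfold DI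
  rw [foldr_Dtot_perm hperm]
  rfl

theorem DI_Dtot (i : Fin n) (I : Multiset (Fin n)) (f : Loc n F) :
    DI I (Dtot i f) = DI (i ::ₘ I) f := by
  have h1 : DI I (Dtot i f) = (I.toList ++ [i]).foldr Dtot f := by
    rw [List.foldr_append]; rfl
  have hperm : (I.toList ++ [i]).Perm (i :: I.toList) := by
    simpa using (List.perm_append_comm (l₁ := I.toList) (l₂ := [i]))
  rw [h1, foldr_Dtot_perm hperm]
  rw [DI_cons]
  rfl

theorem pderiv_support_finite (a : F) (f : Loc n F) :
    {I : Multiset (Fin n) | pderiv (Sum.inr (a, I)) f ≠ 0}.Finite := by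
  apply Set.Finite.subset
    (Set.Finite.preimage (f := fun I : Multiset (Fin n) => (Sum.inr (a, I) : JVar n F))
      (fun I _ J _ h => by simpa using h) (f.vars : Finset (JVar n F)).finite_toSet)
  intro I hI
  simp only [Set.mem_preimage, Finset.mem_coe]
  by_contra hmem
  exact hI (pderiv_eq_zero_of_notMem_vars hmem)

theorem EL_zero (a : F) : EL a (0 : Loc n F) = 0 := by
  unfold EL
  rw [finsum_congr (fun I => by rw [map_zero, DI_zero, smul_zero])]
  exact finsum_zero

theorem EL_add (a : F) (f g : Loc n F) :
    EL a (f + g) = EL a f + EL a g := by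
  unfold EL
  rw [finsum_congr (fun I => by
    rw [map_add, DI_add, smul_add])]
  exact finsum_add_distrib
    ((pderiv_support_finite a f).subset (fun I hI => by
      simp only [Function.mem_support, Set.mem_setOf_eq] at *
      intro h; exact hI (by rw [h, DI_zero, smul_zero])))
    ((pderiv_support_finite a g).subset (fun I hI => by
      simp only [Function.mem_support, Set.mem_setOf_eq] at *
      intro h; exact hI (by rw [h, DI_zero, smul_zero])))

theorem mem_range_cons (i : Fin n) (I : Multiset (Fin n)) :
    I ∈ Set.range (fun J : Multiset (Fin n) => i ::ₘ J) ↔ i ∈ I := by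
  constructor
  · rintro ⟨J, rfl⟩; exact Multiset.mem_cons_self i J
  · intro h; exact ⟨I.erase i, Multiset.cons_erase h⟩

theorem EL_Dtot (a : F) (i : Fin n) (f : Loc n F) :
    EL a (Dtot i f) = 0 := by
  classical
  unfold EL
  have step1 : ∀ I : Multiset (Fin n),
      ((-1 : ℝ) ^ Multiset.card I) • DI I (pderiv (Sum.inr (a, I)) (Dtot i f)) =
        ((-1 : ℝ) ^ Multiset.card I) • DI (i ::ₘ I) (pderiv (Sum.inr (a, I)) f) +
          (if i ∈ I then
            ((-1 : ℝ) ^ Multiset.card I) • DI I (pderiv (Sum.inr (a, I.erase i)) f)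
          else 0) := by
    intro I
    rw [pderiv_Dtot, DI_add, smul_add, DI_Dtot]
    congr 1
    split <;> simp [DI_zero]
  rw [finsum_congr step1]
  have hfin1 : (Function.support fun I : Multiset (Fin n) =>
      ((-1 : ℝ) ^ Multiset.card I) • DI (i ::ₘ I) (pderiv (Sum.inr (a, I)) f)).Finite :=
    (pderiv_support_finite a f).subset (fun I hI => by
      simp only [Function.mem_support, Set.mem_setOf_eq] at *
      intro h; exact hI (by rw [h, DI_zero, smul_zero]))
  have hfin2 : (Function.support fun I : Multiset (Fin n) =>
      (if i ∈ I then
        ((-1 : ℝ) ^ Multiset.card I) • DI I (pderiv (Sum.inr (a, I.erase i)) f)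
      else 0)).Finite := by
    apply Set.Finite.subset ((pderiv_support_finite a f).image (fun J => i ::ₘ J))
    intro I hI
    simp only [Function.mem_support] at hI
    by_cases hiI : i ∈ I
    · refine ⟨I.erase i, ?_, Multiset.cons_erase hiI⟩
      simp only [Set.mem_setOf_eq]
      intro h
      apply hI
      rw [if_pos hiI, h, DI_zero, smul_zero]
    · exact absurd (if_neg hiI) hI
  rw [finsum_add_distrib hfin1 hfin2]
  have key : (∑ᶠ I : Multiset (Fin n),
      (if i ∈ I then
        ((-1 : ℝ) ^ Multiset.card I) • DI I (pderiv (Sum.inr (a, I.erase i)) f)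
      else 0)) =
      -∑ᶠ I : Multiset (Fin n),
        ((-1 : ℝ) ^ Multiset.card I) • DI (i ::ₘ I) (pderiv (Sum.inr (a, I)) f) := by
    have h1 : (∑ᶠ I : Multiset (Fin n),
        (if i ∈ I then
          ((-1 : ℝ) ^ Multiset.card I) • DI I (pderiv (Sum.inr (a, I.erase i)) f)
        else 0)) =
        ∑ᶠ I ∈ Set.range (fun J : Multiset (Fin n) => i ::ₘ J),
          ((-1 : ℝ) ^ Multiset.card I) • DI I (pderiv (Sum.inr (a, I.erase i)) f) := by
      rw [finsum_mem_def]
      refine finsum_congr fun I => ?_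
      rw [Set.indicator_apply]
      exact if_congr (mem_range_cons i I).symm rfl rfl
    rw [h1, finsum_mem_range (fun J₁ J₂ h => (Multiset.cons_inj_right i).mp h)]
    rw [← finsum_neg_distrib]
    refine finsum_congr fun J => ?_
    rw [Multiset.erase_cons_head, Multiset.card_cons, pow_succ, mul_smul]
    simp
  rw [key, add_neg_cancel]

theorem EL_Divg (a : F) (R : Fin n → Loc n F) : EL a (Divg R) = 0 := by
  unfold Divg
  have : ∀ s : Finset (Fin n), EL a (∑ i ∈ s, Dtot i (R i)) = 0 := by
    intro s
    induction s using Finset.induction with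
    | empty => simpa using EL_zero a
    | insert _ _ h ih => rw [Finset.sum_insert h, EL_add, EL_Dtot, ih, add_zero]
  exact this Finset.univ

theorem opApply_zero (w : Multiset (Fin n) → Loc n F) : opApply w 0 = 0 := by
  unfold opApply
  rw [finsum_congr (fun I => by rw [DI_zero, mul_zero])]
  exact finsum_zero

theorem Divg_zero : Divg (fun _ => (0 : Loc n F)) = 0 := by
  unfold Divg
  simp [Dtot_zero]

end Aux

theorem stmt6 (n k : ℕ)
    (ω : Fin k → Fin k → Multiset (Fin n) → Loc n (Fin k))
    (hfin : ∀ a b, {I : Multiset (Fin n) | ω a b I ≠ 0}.Finite)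
    (hskew : ∀ (a b : Fin k) (f : Loc n (Fin k)),
      opApply (ω a b) f =
        - ∑ᶠ I : Multiset (Fin n),
            ((-1 : ℝ) ^ Multiset.card I) • DI I (ω b a I * f)) :
    (∀ (R : Fin n → Loc n (Fin k)) (L : Loc n (Fin k)),
      ∃ S : Fin n → Loc n (Fin k), brkt ω (Divg R) L = Divg S) ∧
    (∀ (R : Fin n → Loc n (Fin k)) (L : Loc n (Fin k)),
      ∃ S : Fin n → Loc n (Fin k), brkt ω L (Divg R) = Divg S) ∧
    (∀ L1 L2 : Loc n (Fin k), brkt ω L1 L2 = - brkt ω L2 L1) := by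
  have hskw : ∀ L1 L2 : Loc n (Fin k), brkt ω L1 L2 = - brkt ω L2 L1 := by
    intro L1 L2
    unfold brkt
    rw [← smul_neg]
    congr 1
    rw [← Finset.sum_neg_distrib]
    refine Finset.sum_congr rfl fun a _ => ?_
    rw [← Finset.sum_neg_distrib]
    exact Finset.sum_congr rfl fun b _ => (neg_sub _ _).symm
  have hz : ∀ (R : Fin n → Loc n (Fin k)) (L : Loc n (Fin k)),
      brkt ω (Divg R) L = Divg (fun _ => 0) := by
    intro R L
    rw [Divg_zero]
    unfold brkt
    rw [Finset.sum_congr rfl (fun a _ => Finset.sum_congr rfl (fun b _ => by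
      rw [EL_Divg, EL_Divg, opApply_zero, zero_mul, mul_zero, sub_zero]))]
    simp
  refine ⟨fun R L => ⟨fun _ => 0, hz R L⟩, fun R L => ⟨fun _ => 0, ?_⟩, hskw⟩
  rw [hskw, hz, Divg_zero, neg_zero]
end

section
/- Let σ^{αβ} be the constant symplectic matrix given by splitting the fiber coordinates into conjugate pairs (u^α, π_β), and define the bracket {L_1 ν, L_2 ν} = [(δL_1/δu^α)(δL_2/δπ_α) − (δL_2/δu^α)(δL_1/δπ_α)] ν on local n-forms. Then for all local functions L_1, L_2, L_3 the Jacobi expression {{L_1 ν, L_2 ν}, L_3 ν} + {{L_2 ν, L_3 ν}, L_1 ν} + {{L_3 ν, L_1 ν}, L_2 ν} is d_H-exact, and hence the induced bracket on F = Ω^n/d_H Ω^{n-1} satisfies the Jacobi identity. -/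
/-!
STATEMENT 7.  The fiber coordinates split into conjugate pairs
`(u^α, π_α)` (fiber index type `Fin m ⊕ Fin m`, `Sum.inl` the `u`'s,
`Sum.inr` the `π`'s), with the constant symplectic operator matrix.  The
bracket on local `n`-forms (identified with their coefficient functions) is
`{L1 ν, L2 ν} = [(δL1/δu^α)(δL2/δπ_α) - (δL2/δu^α)(δL1/δπ_α)] ν`.
Then for all local functions `L1, L2, L3` the cyclic Jacobi expression is
`d_H`-exact (a total divergence `D_i R^i`), hence the induced bracket on
`F = Ωⁿ/d_H Ω^{n-1}` satisfies the Jacobi identity: the constant symplectic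
matrix is Hamiltonian.
-/

open MvPolynomial

/-- The Darboux-coordinate bracket on local `n`-forms. -/
noncomputable def dbrkt {n m : ℕ}
    (L1 L2 : Loc n (Fin m ⊕ Fin m)) : Loc n (Fin m ⊕ Fin m) :=
  ∑ α : Fin m,
    (EL (Sum.inl α) L1 * EL (Sum.inr α) L2 -
      EL (Sum.inl α) L2 * EL (Sum.inr α) L1)

namespace Jacobi

variable {n : ℕ} {F : Type} [DecidableEq F]

theorem derivation_eq_sum (D : Derivation ℝ (Loc n F) (Loc n F)) (f : Loc n F)
    (S : Finset (JVar n F)) (hS : f.vars ⊆ S) :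
    D f = ∑ v ∈ S, pderiv v f * D (X v) := by
  have hf : f ∈ Algebra.adjoin ℝ (X '' (↑S : Set (JVar n F))) := by
    rw [← supported_eq_adjoin_X, mem_supported]
    exact_mod_cast fun x hx => hS hx
  clear hS
  induction hf using Algebra.adjoin_induction with
  | mem x hx =>
      obtain ⟨v, hv, rfl⟩ := hx
      rw [Finset.sum_eq_single_of_mem v (by exact_mod_cast hv)]
      · simp [pderiv_X]
      · intro w _ hw
        simp [pderiv_X, Pi.single_apply, Ne.symm hw]
  | algebraMap r =>
      have h1 : D ((algebraMap ℝ (Loc n F)) r) = 0 := D.map_algebraMap r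
      simp [h1]
  | add x y hx hy ihx ihy =>
      simp only [map_add, ihx, ihy, ← Finset.sum_add_distrib]
      exact Finset.sum_congr rfl fun v _ => by ring
  | mul x y hx hy ihx ihy =>
      rw [D.leibniz, smul_eq_mul, smul_eq_mul, ihx, ihy, Finset.mul_sum, Finset.mul_sum,
        ← Finset.sum_add_distrib]
      congr 1; ext v
      rw [(pderiv v).leibniz, smul_eq_mul, smul_eq_mul]; ring

/-- The total derivative as a derivation. -/
noncomputable def Dt (i : Fin n) : Derivation ℝ (Loc n F) (Loc n F) :=
  mkDerivation ℝ (fun v => match v with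
    | Sum.inl j => if i = j then 1 else 0
    | Sum.inr (a, I) => X (Sum.inr (a, i ::ₘ I)))

@[simp] theorem Dt_X_inl (i j : Fin n) :
    Dt (F := F) i (X (Sum.inl j)) = if i = j then 1 else 0 := by
  rw [Dt, mkDerivation_X]

@[simp] theorem Dt_X_inr (i : Fin n) (a : F) (I : Multiset (Fin n)) :
    Dt i (X (Sum.inr (a, I))) = X (Sum.inr (a, i ::ₘ I)) := by
  rw [Dt, mkDerivation_X]

theorem Dtot_eq (i : Fin n) (f : Loc n F) : Dtot i f = Dt i f := by
  rw [derivation_eq_sum (Dt i) f (insert (Sum.inl i) f.vars) (Finset.subset_insert _ _), Dtot]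
  have key : ∀ v ∈ insert (Sum.inl i) f.vars,
      pderiv v f * Dt (F := F) i (X v) =
        (if v = Sum.inl i then pderiv (Sum.inl i) f else 0) +
          (match v with
            | Sum.inl _ => 0
            | Sum.inr (a, I) => X (Sum.inr (a, i ::ₘ I)) * pderiv v f) := by
    intro v _
    rcases v with j | ⟨a, I⟩
    · rw [Dt_X_inl]
      by_cases h : i = j
      · subst h; simp
      · simp [h, Ne.symm h, (fun hh => h (Sum.inl.inj hh.symm) : ¬ Sum.inl j = Sum.inl i)]
    · rw [Dt_X_inr]; simp [mul_comm]
  rw [Finset.sum_congr rfl key, Finset.sum_add_distrib]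
  congr 1
  · rw [Finset.sum_ite_eq' (insert (Sum.inl i) f.vars) (Sum.inl i)]
    simp
  · apply Finset.sum_subset (Finset.subset_insert _ _)
    intro v _ hv
    rcases v with j | ⟨a, I⟩
    · rfl
    · simp [pderiv_eq_zero_of_notMem_vars hv]

theorem Dt_comm (i j : Fin n) (f : Loc n F) : Dt i (Dt j f) = Dt j (Dt i f) := by
  have h : ⁅Dt (F := F) i, Dt (F := F) j⁆ = 0 := by
    apply derivation_ext
    intro v
    rcases v with k | ⟨a, I⟩
    · rw [Derivation.commutator_apply]
      by_cases h1 : i = k <;> by_cases h2 : j = k <;>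
        simp [h1, h2]
    · rw [Derivation.commutator_apply]
      simp [Multiset.cons_swap]
  have h2 := congrArg (fun D : Derivation ℝ (Loc n F) (Loc n F) => D f) h
  simp only [Derivation.commutator_apply, Derivation.zero_apply] at h2
  exact sub_eq_zero.mp h2


/-! ### Iterated total derivatives -/

theorem DI_coe (l : List (Fin n)) (f : Loc n F) :
    DI (↑l : Multiset (Fin n)) f = l.foldr (fun i g => Dt i g) f := by
  haveI : LeftCommutative (fun (i : Fin n) (g : Loc n F) => Dt i g) := ⟨Dt_comm⟩
  have hperm : ((↑l : Multiset (Fin n)).toList).Perm l := by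
    rw [← Multiset.coe_eq_coe, Multiset.coe_toList]
  rw [DI]
  have : ∀ (l' : List (Fin n)) (g : Loc n F),
      l'.foldr Dtot g = l'.foldr (fun i h => Dt i h) g := by
    intro l' g
    induction l' with
    | nil => rfl
    | cons a t ih => simp only [List.foldr_cons, ih, Dtot_eq]
  rw [this]
  exact hperm.foldr_eq f

theorem DI_zero (f : Loc n F) : DI 0 f = f := by simp [DI]

theorem DI_cons (i : Fin n) (I : Multiset (Fin n)) (f : Loc n F) :
    DI (i ::ₘ I) f = Dt i (DI I f) := by
  refine Quotient.inductionOn I (fun l => ?_)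
  show DI (i ::ₘ (↑l : Multiset (Fin n))) f = Dt i (DI (↑l : Multiset (Fin n)) f)
  rw [Multiset.cons_coe, DI_coe, DI_coe, List.foldr_cons]

theorem DI_Dt_comm (I : Multiset (Fin n)) (i : Fin n) (f : Loc n F) :
    DI I (Dt i f) = Dt i (DI I f) := by
  induction I using Multiset.induction_on with
  | empty => rw [DI_zero, DI_zero]
  | cons j J ih => rw [DI_cons, DI_cons, ih, Dt_comm]

theorem DI_add (I : Multiset (Fin n)) (f g : Loc n F) :
    DI I (f + g) = DI I f + DI I g := by
  induction I using Multiset.induction_on with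
  | empty => rw [DI_zero, DI_zero, DI_zero]
  | cons j J ih => rw [DI_cons, DI_cons, DI_cons, ih, map_add]

theorem DI_sub (I : Multiset (Fin n)) (f g : Loc n F) :
    DI I (f - g) = DI I f - DI I g := by
  induction I using Multiset.induction_on with
  | empty => rw [DI_zero, DI_zero, DI_zero]
  | cons j J ih => rw [DI_cons, DI_cons, DI_cons, ih, map_sub]

theorem DI_zero_map (I : Multiset (Fin n)) : DI I (0 : Loc n F) = 0 := by
  induction I using Multiset.induction_on with
  | empty => rw [DI_zero]
  | cons j J ih => rw [DI_cons, ih, map_zero]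

theorem DI_smul (I : Multiset (Fin n)) (r : ℝ) (f : Loc n F) :
    DI I (r • f) = r • DI I f := by
  induction I using Multiset.induction_on with
  | empty => rw [DI_zero, DI_zero]
  | cons j J ih => rw [DI_cons, DI_cons, ih, (Dt j).map_smul]

/-! ### Evolutionary vector fields -/

/-- Prolonged evolutionary vector field with characteristic `Q`. -/
noncomputable def prv (Q : F → Loc n F) : Derivation ℝ (Loc n F) (Loc n F) :=
  mkDerivation ℝ (fun v => match v with
    | Sum.inl _ => 0
    | Sum.inr (a, I) => DI I (Q a))

@[simp] theorem prv_X_inl (Q : F → Loc n F) (j : Fin n) :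
    prv Q (X (Sum.inl j)) = 0 := by rw [prv, mkDerivation_X]

@[simp] theorem prv_X_inr (Q : F → Loc n F) (a : F) (I : Multiset (Fin n)) :
    prv Q (X (Sum.inr (a, I))) = DI I (Q a) := by rw [prv, mkDerivation_X]

theorem prv_Dt (Q : F → Loc n F) (i : Fin n) (f : Loc n F) :
    prv Q (Dt i f) = Dt i (prv Q f) := by
  have h : ⁅prv Q, Dt (F := F) i⁆ = 0 := by
    apply derivation_ext
    intro v
    rcases v with k | ⟨a, I⟩
    · rw [Derivation.commutator_apply]
      by_cases h1 : i = k <;> simp [h1]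
    · rw [Derivation.commutator_apply]
      simp [DI_cons]
  have h2 := congrArg (fun D : Derivation ℝ (Loc n F) (Loc n F) => D f) h
  simp only [Derivation.commutator_apply, Derivation.zero_apply] at h2
  exact sub_eq_zero.mp h2

theorem prv_DI (Q : F → Loc n F) (I : Multiset (Fin n)) (f : Loc n F) :
    prv Q (DI I f) = DI I (prv Q f) := by
  induction I using Multiset.induction_on with
  | empty => rw [DI_zero, DI_zero]
  | cons j J ih => rw [DI_cons, DI_cons, prv_Dt, ih]

theorem prv_comm (Q P : F → Loc n F) (f : Loc n F) :
    prv Q (prv P f) - prv P (prv Q f) =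
      prv (fun a => prv Q (P a) - prv P (Q a)) f := by
  have h : ⁅prv Q, prv P⁆ = prv (fun a => prv Q (P a) - prv P (Q a)) := by
    apply derivation_ext
    intro v
    rcases v with k | ⟨a, I⟩
    · rw [Derivation.commutator_apply]; simp
    · rw [Derivation.commutator_apply]
      simp only [prv_X_inr, DI_sub, prv_DI]
  have h2 := congrArg (fun D : Derivation ℝ (Loc n F) (Loc n F) => D f) h
  simp only [Derivation.commutator_apply] at h2
  exact h2


/-! ### Divergences -/

def IsDiv (f : Loc n F) : Prop := ∃ R : Fin n → Loc n F, f = Divg R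

theorem Divg_eq (R : Fin n → Loc n F) : Divg R = ∑ i, Dt i (R i) := by
  rw [Divg]; exact Finset.sum_congr rfl fun i _ => Dtot_eq i (R i)

theorem isDiv_zero : IsDiv (0 : Loc n F) :=
  ⟨fun _ => 0, by simp [Divg_eq]⟩

theorem isDiv_add {f g : Loc n F} (hf : IsDiv f) (hg : IsDiv g) : IsDiv (f + g) := by
  obtain ⟨R, rfl⟩ := hf; obtain ⟨S, rfl⟩ := hg
  exact ⟨fun i => R i + S i, by simp [Divg_eq, Finset.sum_add_distrib]⟩

theorem isDiv_neg {f : Loc n F} (hf : IsDiv f) : IsDiv (-f) := by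
  obtain ⟨R, rfl⟩ := hf
  exact ⟨fun i => -(R i), by simp [Divg_eq, Finset.sum_neg_distrib]⟩

theorem isDiv_sub {f g : Loc n F} (hf : IsDiv f) (hg : IsDiv g) : IsDiv (f - g) := by
  rw [sub_eq_add_neg]; exact isDiv_add hf (isDiv_neg hg)

theorem isDiv_smul (r : ℝ) {f : Loc n F} (hf : IsDiv f) : IsDiv (r • f) := by
  obtain ⟨R, rfl⟩ := hf
  refine ⟨fun i => r • R i, ?_⟩
  rw [Divg_eq, Divg_eq, Finset.smul_sum]
  exact Finset.sum_congr rfl fun i _ => ((Dt i).map_smul r (R i)).symm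

theorem isDiv_Dt (i : Fin n) (f : Loc n F) : IsDiv (Dt i f) := by
  classical
  refine ⟨fun j => if j = i then f else 0, ?_⟩
  rw [Divg_eq, Finset.sum_eq_single_of_mem i (Finset.mem_univ i)]
  · simp
  · intro j _ hj; simp [hj]

theorem isDiv_sum {α : Type*} (s : Finset α) (f : α → Loc n F)
    (h : ∀ a ∈ s, IsDiv (f a)) : IsDiv (∑ a ∈ s, f a) := by
  classical
  induction s using Finset.induction_on with
  | empty => simpa using isDiv_zero
  | insert x t hnot ih =>
      rw [Finset.sum_insert hnot]
      exact isDiv_add (h _ (Finset.mem_insert_self _ _))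
        (ih fun a ha => h a (Finset.mem_insert_of_mem ha))

theorem isDiv_prv (Q : F → Loc n F) {f : Loc n F} (hf : IsDiv f) : IsDiv (prv Q f) := by
  obtain ⟨R, rfl⟩ := hf
  rw [Divg_eq, map_sum]
  exact isDiv_sum _ _ fun i _ => by rw [prv_Dt]; exact isDiv_Dt _ _

/-! ### Integration by parts -/

theorem isDiv_ibp (I : Multiset (Fin n)) (q p : Loc n F) :
    IsDiv (DI I q * p - ((-1 : ℝ) ^ Multiset.card I) • (q * DI I p)) := by
  induction I using Multiset.induction_on generalizing p with
  | empty =>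
      simpa [DI_zero] using isDiv_zero
  | cons i J ih =>
      have leib : Dt i (DI J q * p) = DI J q • Dt i p + p • Dt i (DI J q) := (Dt i).leibniz _ _
      have key : DI (i ::ₘ J) q * p
          = Dt i (DI J q * p) - DI J q * Dt i p := by
        rw [DI_cons, leib]; simp only [smul_eq_mul]; ring
      rw [key]
      have h1 : IsDiv (Dt i (DI J q * p)) := isDiv_Dt _ _
      have h2 := ih (Dt i p)
      have hcard : ((-1 : ℝ) ^ Multiset.card (i ::ₘ J))
          = -((-1 : ℝ) ^ Multiset.card J) := by
        rw [Multiset.card_cons, pow_succ]; ring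
      have h3 : Dt i (DI J q * p) - DI J q * Dt i p -
            ((-1 : ℝ) ^ Multiset.card (i ::ₘ J)) • (q * DI (i ::ₘ J) p)
          = Dt i (DI J q * p) -
            (DI J q * Dt i p - ((-1 : ℝ) ^ Multiset.card J) • (q * DI J (Dt i p))) := by
        rw [hcard]
        have : DI (i ::ₘ J) p = DI J (Dt i p) := by rw [DI_cons, DI_Dt_comm]
        rw [this, neg_smul]; ring
      rw [h3]
      exact isDiv_sub h1 h2


/-! ### The Euler-Lagrange derivative as a finite sum -/

/-- The multi-indices appearing among the variables of `f`. -/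
noncomputable def varT (f : Loc n F) : Finset (Multiset (Fin n)) :=
  f.vars.image (fun v => match v with
    | Sum.inl _ => (0 : Multiset (Fin n))
    | Sum.inr (_, I) => I)

theorem mem_varT {f : Loc n F} {a : F} {I : Multiset (Fin n)}
    (h : Sum.inr (a, I) ∈ f.vars) : I ∈ varT f := by
  rw [varT, Finset.mem_image]
  exact ⟨Sum.inr (a, I), h, rfl⟩

theorem EL_eq_sum (a : F) (f : Loc n F) (T : Finset (Multiset (Fin n)))
    (hT : ∀ I : Multiset (Fin n), Sum.inr (a, I) ∈ f.vars → I ∈ T) :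
    EL a f = ∑ I ∈ T, ((-1 : ℝ) ^ Multiset.card I) • DI I (pderiv (Sum.inr (a, I)) f) := by
  rw [EL]
  apply finsum_eq_sum_of_support_subset
  intro I hI
  simp only [Function.mem_support] at hI
  by_contra hIT
  apply hI
  have hv : Sum.inr (a, I) ∉ f.vars := fun hm => hIT (by exact_mod_cast hT I hm)
  rw [pderiv_eq_zero_of_notMem_vars hv, DI_zero_map, smul_zero]

theorem prv_eq_sum [Fintype F] (Q : F → Loc n F) (f : Loc n F) :
    prv Q f = ∑ a : F, ∑ I ∈ varT f, DI I (Q a) * pderiv (Sum.inr (a, I)) f := by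
  classical
  set s : Finset (JVar n F) :=
    (Finset.univ ×ˢ varT f).image (fun p : F × Multiset (Fin n) => Sum.inr p) with hs
  set S : Finset (JVar n F) := f.vars ∪ s with hS
  rw [derivation_eq_sum (prv Q) f S Finset.subset_union_left]
  have step1 : ∑ v ∈ S, pderiv v f * prv Q (X v) = ∑ v ∈ s, pderiv v f * prv Q (X v) := by
    apply (Finset.sum_subset Finset.subset_union_right _).symm
    intro v hv hvs
    rcases v with j | ⟨b, I⟩
    · simp
    · exfalso
      apply hvs
      rw [hs, Finset.mem_image]
      refine ⟨(b, I), ?_, rfl⟩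
      rw [Finset.mem_product]
      have hvf : Sum.inr (b, I) ∈ f.vars := by
        rcases Finset.mem_union.mp hv with h | h
        · exact h
        · exact absurd h hvs
      exact ⟨Finset.mem_univ _, mem_varT hvf⟩
  rw [step1, hs, Finset.sum_image (by intro p _ q _ h; exact Sum.inr.inj h)]
  rw [Finset.sum_product]
  exact Finset.sum_congr rfl fun a _ => Finset.sum_congr rfl fun I _ => by
    rw [prv_X_inr, mul_comm]

/-- Key lemma: `prv Q f` agrees with `Σ_a Q^a (EL_a f)` modulo divergences. -/
theorem M1 [Fintype F] (Q : F → Loc n F) (f : Loc n F) :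
    IsDiv (prv Q f - ∑ a : F, Q a * EL a f) := by
  classical
  rw [prv_eq_sum Q f]
  have hEL : ∀ a : F, Q a * EL a f
      = ∑ I ∈ varT f, ((-1 : ℝ) ^ Multiset.card I) • (Q a * DI I (pderiv (Sum.inr (a, I)) f)) := by
    intro a
    rw [EL_eq_sum a f (varT f) (fun I h => mem_varT h), Finset.mul_sum]
    exact Finset.sum_congr rfl fun I _ => mul_smul_comm _ _ _
  rw [Finset.sum_congr rfl fun a (_ : a ∈ Finset.univ) => hEL a, ← Finset.sum_sub_distrib]
  apply isDiv_sum
  intro a _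
  rw [← Finset.sum_sub_distrib]
  apply isDiv_sum
  intro I _
  exact isDiv_ibp I (Q a) (pderiv (Sum.inr (a, I)) f)


/-! ### Equality modulo divergences -/

def Equ (f g : Loc n F) : Prop := IsDiv (f - g)

theorem equ_of_eq {f g : Loc n F} (h : f = g) : Equ f g := by
  rw [Equ, h, sub_self]; exact isDiv_zero

theorem equ_refl (f : Loc n F) : Equ f f := equ_of_eq rfl

theorem equ_symm {f g : Loc n F} (h : Equ f g) : Equ g f := by
  rw [Equ, show g - f = -(f - g) by ring]; exact isDiv_neg h

theorem equ_trans {f g h : Loc n F} (h1 : Equ f g) (h2 : Equ g h) : Equ f h := by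
  rw [Equ, show f - h = (f - g) + (g - h) by ring]; exact isDiv_add h1 h2

theorem equ_add {f g f' g' : Loc n F} (h : Equ f g) (h' : Equ f' g') :
    Equ (f + f') (g + g') := by
  rw [Equ, show f + f' - (g + g') = (f - g) + (f' - g') by ring]; exact isDiv_add h h'

theorem equ_neg {f g : Loc n F} (h : Equ f g) : Equ (-f) (-g) := by
  rw [Equ, show -f - -g = -(f - g) by ring]; exact isDiv_neg h

theorem equ_prv {Q : F → Loc n F} {f g : Loc n F} (h : Equ f g) :
    Equ (prv Q f) (prv Q g) := by
  rw [Equ, ← map_sub]; exact isDiv_prv Q h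

theorem isDiv_of_equ_zero {f : Loc n F} (h : Equ f 0) : IsDiv f := by
  rw [Equ, sub_zero] at h; exact h

theorem equ_M1 [Fintype F] (Q : F → Loc n F) (f : Loc n F) :
    Equ (prv Q f) (∑ a : F, Q a * EL a f) := M1 Q f

/-! ### Self-adjointness of the Hessian of a variational expression -/

theorem selfadj [Fintype F] (P Q : F → Loc n F) (L : Loc n F) :
    Equ (∑ a : F, P a * prv Q (EL a L)) (∑ a : F, Q a * prv P (EL a L)) := by
  have expand : ∀ P' Q' : F → Loc n F, ∑ a : F, P' a * prv Q' (EL a L)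
      = prv Q' (∑ a : F, P' a * EL a L) - ∑ a : F, prv Q' (P' a) * EL a L := by
    intro P' Q'
    rw [map_sum, ← Finset.sum_sub_distrib]
    refine Finset.sum_congr rfl fun a _ => ?_
    rw [(prv Q').leibniz]
    simp only [smul_eq_mul]; ring
  have hsplit : ∑ a : F, (fun b => prv Q (P b) - prv P (Q b)) a * EL a L
      = ∑ a : F, prv Q (P a) * EL a L - ∑ a : F, prv P (Q a) * EL a L := by
    rw [← Finset.sum_sub_distrib]
    exact Finset.sum_congr rfl fun a _ => by ring
  have key : (∑ a : F, P a * prv Q (EL a L)) - (∑ a : F, Q a * prv P (EL a L))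
      = prv Q ((∑ a : F, P a * EL a L) - prv P L)
        - prv P ((∑ a : F, Q a * EL a L) - prv Q L)
        + (prv (fun b => prv Q (P b) - prv P (Q b)) L
            - ∑ a : F, (fun b => prv Q (P b) - prv P (Q b)) a * EL a L) := by
    rw [expand P Q, expand Q P, map_sub, map_sub, ← prv_comm, hsplit]
    ring
  rw [Equ, key]
  refine isDiv_add (isDiv_sub ?_ ?_) ?_
  · exact isDiv_prv _ (by rw [show (∑ a : F, P a * EL a L) - prv P L
      = -(prv P L - ∑ a : F, P a * EL a L) by ring]; exact isDiv_neg (M1 P L))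
  · exact isDiv_prv _ (by rw [show (∑ a : F, Q a * EL a L) - prv Q L
      = -(prv Q L - ∑ a : F, Q a * EL a L) by ring]; exact isDiv_neg (M1 Q L))
  · exact M1 _ L


/-! ### The symplectic structure -/

section Symplectic

variable {n m : ℕ}

/-- The Hamiltonian characteristic `σ δL`. -/
noncomputable def QC (L : Loc n (Fin m ⊕ Fin m)) :
    (Fin m ⊕ Fin m) → Loc n (Fin m ⊕ Fin m) := fun a =>
  match a with
  | Sum.inl α => EL (Sum.inr α) L
  | Sum.inr α => -(EL (Sum.inl α) L)

/-- Application of the constant symplectic matrix to a tuple. -/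
noncomputable def sig (s : (Fin m ⊕ Fin m) → Loc n (Fin m ⊕ Fin m)) :
    (Fin m ⊕ Fin m) → Loc n (Fin m ⊕ Fin m) := fun a =>
  match a with
  | Sum.inl α => s (Sum.inr α)
  | Sum.inr α => -(s (Sum.inl α))

theorem QC_eq_sig (L : Loc n (Fin m ⊕ Fin m)) : QC L = sig (fun a => EL a L) := by
  funext a; cases a <;> rfl

theorem sigpair (s t : (Fin m ⊕ Fin m) → Loc n (Fin m ⊕ Fin m)) :
    ∑ a, sig s a * t a = -∑ a, sig t a * s a := by
  rw [Fintype.sum_sum_type, Fintype.sum_sum_type]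
  simp only [sig]
  rw [← Finset.sum_add_distrib, ← Finset.sum_add_distrib, ← Finset.sum_neg_distrib]
  exact Finset.sum_congr rfl fun α _ => by ring

theorem pair (F G : Loc n (Fin m ⊕ Fin m)) :
    dbrkt F G = ∑ a, QC G a * EL a F := by
  rw [dbrkt, Fintype.sum_sum_type]
  simp only [QC]
  rw [← Finset.sum_add_distrib]
  exact Finset.sum_congr rfl fun α _ => by ring

theorem antisym (F G : Loc n (Fin m ⊕ Fin m)) : dbrkt F G = -(dbrkt G F) := by
  rw [dbrkt, dbrkt, ← Finset.sum_neg_distrib]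
  exact Finset.sum_congr rfl fun α _ => by ring

theorem h1 (F G : Loc n (Fin m ⊕ Fin m)) : Equ (dbrkt F G) (prv (QC G) F) := by
  rw [Equ, pair, show (∑ a, QC G a * EL a F) - prv (QC G) F
    = -(prv (QC G) F - ∑ a, QC G a * EL a F) by ring]
  exact isDiv_neg (M1 _ F)

theorem h2 (F G H : Loc n (Fin m ⊕ Fin m)) :
    Equ (dbrkt (dbrkt F G) H) (prv (QC H) (prv (QC G) F)) :=
  equ_trans (h1 (dbrkt F G) H) (equ_prv (h1 F G))

theorem h2' (F G H : Loc n (Fin m ⊕ Fin m)) :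
    Equ (dbrkt (dbrkt F G) H) (-(prv (QC H) (prv (QC F) G))) := by
  refine equ_trans (h1 (dbrkt F G) H) ?_
  rw [antisym F G, map_neg]
  exact equ_neg (equ_prv (h1 G F))

theorem Csig (Lp Lq : Loc n (Fin m ⊕ Fin m)) :
    (fun a => prv (QC Lp) (QC Lq a) - prv (QC Lq) (QC Lp a))
      = sig (fun a => prv (QC Lp) (EL a Lq) - prv (QC Lq) (EL a Lp)) := by
  funext a
  cases a with
  | inl α => rfl
  | inr α =>
      show prv (QC Lp) (-(EL (Sum.inl α) Lq)) - prv (QC Lq) (-(EL (Sum.inl α) Lp))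
        = -(prv (QC Lp) (EL (Sum.inl α) Lq) - prv (QC Lq) (EL (Sum.inl α) Lp))
      rw [map_neg, map_neg]; ring

theorem pairB (s : (Fin m ⊕ Fin m) → Loc n (Fin m ⊕ Fin m)) (Lj : Loc n (Fin m ⊕ Fin m)) :
    ∑ a, sig s a * EL a Lj = -∑ a, QC Lj a * s a := by
  rw [QC_eq_sig, sigpair]

theorem hterm (Lp Lq Lj : Loc n (Fin m ⊕ Fin m)) :
    ∑ a, (prv (QC Lp) (QC Lq a) - prv (QC Lq) (QC Lp a)) * EL a Lj
      = ∑ a, QC Lj a * prv (QC Lq) (EL a Lp) - ∑ a, QC Lj a * prv (QC Lp) (EL a Lq) := by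
  have := congrArg (fun s => ∑ a, s a * EL a Lj) (Csig Lp Lq)
  simp only at this
  rw [this, pairB, ← Finset.sum_sub_distrib, ← Finset.sum_neg_distrib]
  exact Finset.sum_congr rfl fun a _ => by ring

end Symplectic

end Jacobi

theorem stmt7 (n m : ℕ) (L1 L2 L3 : Loc n (Fin m ⊕ Fin m)) :
    ∃ R : Fin n → Loc n (Fin m ⊕ Fin m),
      dbrkt (dbrkt L1 L2) L3 + dbrkt (dbrkt L2 L3) L1 +
        dbrkt (dbrkt L3 L1) L2 = Divg R := by
  classical
  open Jacobi in
  set J := dbrkt (dbrkt L1 L2) L3 + dbrkt (dbrkt L2 L3) L1 + dbrkt (dbrkt L3 L1) L2 with hJ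
  suffices h : IsDiv J by obtain ⟨R, hR⟩ := h; exact ⟨R, hR⟩
  have hX : Equ J (prv (QC L3) (prv (QC L2) L1) + prv (QC L1) (prv (QC L3) L2)
      + prv (QC L2) (prv (QC L1) L3)) :=
    equ_add (equ_add (h2 L1 L2 L3) (h2 L2 L3 L1)) (h2 L3 L1 L2)
  have hY : Equ J (-(prv (QC L3) (prv (QC L1) L2)) + -(prv (QC L1) (prv (QC L2) L3))
      + -(prv (QC L2) (prv (QC L3) L1))) :=
    equ_add (equ_add (h2' L1 L2 L3) (h2' L2 L3 L1)) (h2' L3 L1 L2)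
  have hJJ := equ_add hX hY
  have hXY : (prv (QC L3) (prv (QC L2) L1) + prv (QC L1) (prv (QC L3) L2)
        + prv (QC L2) (prv (QC L1) L3))
        + (-(prv (QC L3) (prv (QC L1) L2)) + -(prv (QC L1) (prv (QC L2) L3))
          + -(prv (QC L2) (prv (QC L3) L1)))
      = prv (fun a => prv (QC L1) (QC L3 a) - prv (QC L3) (QC L1 a)) L2
        + prv (fun a => prv (QC L2) (QC L1 a) - prv (QC L1) (QC L2 a)) L3
        + prv (fun a => prv (QC L3) (QC L2 a) - prv (QC L2) (QC L3 a)) L1 := by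
    rw [← prv_comm, ← prv_comm, ← prv_comm]; ring
  have hW : Equ (J + J)
      ((∑ a, (prv (QC L1) (QC L3 a) - prv (QC L3) (QC L1 a)) * EL a L2)
        + (∑ a, (prv (QC L2) (QC L1 a) - prv (QC L1) (QC L2 a)) * EL a L3)
        + (∑ a, (prv (QC L3) (QC L2 a) - prv (QC L2) (QC L3 a)) * EL a L1)) :=
    equ_trans (equ_trans hJJ (equ_of_eq hXY))
      (equ_add (equ_add (equ_M1 _ _) (equ_M1 _ _)) (equ_M1 _ _))
  have hW2 : Equ (J + J)
      ((∑ a, QC L2 a * prv (QC L3) (EL a L1) - ∑ a, QC L2 a * prv (QC L1) (EL a L3))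
        + (∑ a, QC L3 a * prv (QC L1) (EL a L2) - ∑ a, QC L3 a * prv (QC L2) (EL a L1))
        + (∑ a, QC L1 a * prv (QC L2) (EL a L3) - ∑ a, QC L1 a * prv (QC L3) (EL a L2))) := by
    rw [← hterm L1 L3 L2, ← hterm L2 L1 L3, ← hterm L3 L2 L1]
    exact hW
  have e1 := selfadj (QC L2) (QC L3) L1
  have e2 := selfadj (QC L3) (QC L1) L2
  have e3 := selfadj (QC L1) (QC L2) L3
  have hWzero : Equ
      ((∑ a, QC L2 a * prv (QC L3) (EL a L1) - ∑ a, QC L2 a * prv (QC L1) (EL a L3))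
        + (∑ a, QC L3 a * prv (QC L1) (EL a L2) - ∑ a, QC L3 a * prv (QC L2) (EL a L1))
        + (∑ a, QC L1 a * prv (QC L2) (EL a L3) - ∑ a, QC L1 a * prv (QC L3) (EL a L2)))
      0 := by
    rw [Equ, sub_zero, show
      (∑ a, QC L2 a * prv (QC L3) (EL a L1) - ∑ a, QC L2 a * prv (QC L1) (EL a L3))
        + (∑ a, QC L3 a * prv (QC L1) (EL a L2) - ∑ a, QC L3 a * prv (QC L2) (EL a L1))
        + (∑ a, QC L1 a * prv (QC L2) (EL a L3) - ∑ a, QC L1 a * prv (QC L3) (EL a L2))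
      = (∑ a, QC L2 a * prv (QC L3) (EL a L1) - ∑ a, QC L3 a * prv (QC L2) (EL a L1))
        + (∑ a, QC L3 a * prv (QC L1) (EL a L2) - ∑ a, QC L1 a * prv (QC L3) (EL a L2))
        + (∑ a, QC L1 a * prv (QC L2) (EL a L3) - ∑ a, QC L2 a * prv (QC L1) (EL a L3)) by ring]
    exact isDiv_add (isDiv_add e1 e2) e3
  have hJJdiv : IsDiv (J + J) := isDiv_of_equ_zero (equ_trans hW2 hWzero)
  have hhalf : J = (2⁻¹ : ℝ) • (J + J) := by
    rw [show J + J = (2 : ℝ) • J from (two_smul ℝ J).symm, smul_smul,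
      inv_mul_cancel₀ (two_ne_zero), one_smul]
  rw [hhalf]
  exact isDiv_smul _ hJJdiv
end

section
/- In ordinary mechanics with BRST differential s as above, the local antibracket of two ghost-number −1 cocycles a_i = [(∂f_i/∂q) p^* − (∂f_i/∂p) q^*] dt (i = 1,2), computed as {a_1, a_2} = [(δ^R a_1 / δφ^A)(δ^L a_2 / δφ^*_A) − (δ^R a_1 / δφ^*_A)(δ^L a_2 / δφ^A)] dt with φ^A = (q,p), equals the cocycle associated with the Poisson bracket of the first integrals: {a_1, a_2} = [(∂[f_1,f_2]_P/∂q) p^* − (∂[f_1,f_2]_P/∂p) q^*] dt, where [f_1,f_2]_P is the standard Poisson bracket. -/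
/-!
STATEMENT 10.  Ordinary mechanics (variables `q^{(j)}, p^{(j)}, q*^{(j)},
p*^{(j)}` encoded as `MVar = Fin 4 × ℕ`, families `0 = q`, `1 = p`, `2 = q*`,
`3 = p*`).  The ghost-number `-1` cocycles attached to first integrals are
`a_i = g(f_i) dt` with `g(f) = (∂f/∂q) p* - (∂f/∂p) q*`.  The local
antibracket of `1`-forms,
`{a1, a2} = [(δ^R a1/δφ^A)(δ^L a2/δφ*_A) - (δ^R a1/δφ*_A)(δ^L a2/δφ^A)] dt`
with `φ^A = (q,p)` and Euler–Lagrange derivatives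
`δ/δz = Σ_k (-Dt)^k ∂/∂z^{(k)}` (the graded right/left derivative signs are
rendered in this ungraded polynomial model by the ordering of the four terms),
equals the cocycle of the Poisson bracket of the first integrals:
`{a1, a2} = g([f1, f2]_P)`.
-/

open MvPolynomial

abbrev MVar := Fin 4 × ℕ

abbrev MLoc := MvPolynomial MVar ℝ

/-- Total time derivative. -/
noncomputable def Dt (f : MLoc) : MLoc :=
  ∑ v ∈ f.vars, X (v.1, v.2 + 1) * pderiv v f

/-- Euler–Lagrange derivative with respect to the family `fam`:
`Σ_k (-Dt)^k (∂g/∂z^{(k)})`. -/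
noncomputable def ELm (fam : Fin 4) (g : MLoc) : MLoc :=
  ∑ᶠ j : ℕ, ((-1 : ℝ) ^ j) • Dt^[j] (pderiv (fam, j) g)

/-- The local antibracket (coefficient of `dt`), `φ^A = (q,p)`,
`φ*_A = (q*,p*)`. -/
noncomputable def antibrkt (g1 g2 : MLoc) : MLoc :=
  ELm 2 g1 * ELm 0 g2 + ELm 3 g1 * ELm 1 g2
    - ELm 0 g1 * ELm 2 g2 - ELm 1 g1 * ELm 3 g2

/-- Hamiltonian vector-field cocycle of a first integral:
`g(f) = (∂f/∂q) p* - (∂f/∂p) q*`. -/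
noncomputable def gOf (f : MLoc) : MLoc :=
  pderiv ((0 : Fin 4), 0) f * X ((3 : Fin 4), 0) -
    pderiv ((1 : Fin 4), 0) f * X ((2 : Fin 4), 0)

/-- Standard Poisson bracket. -/
noncomputable def pbr (f1 f2 : MLoc) : MLoc :=
  pderiv ((0 : Fin 4), 0) f1 * pderiv ((1 : Fin 4), 0) f2 -
    pderiv ((1 : Fin 4), 0) f1 * pderiv ((0 : Fin 4), 0) f2

/-- Embedding of functions of `(q,p)` alone. -/
noncomputable def embQP : MvPolynomial (Fin 2) ℝ →+* MLoc :=
  (rename (fun j : Fin 2 => ((Fin.castLE (by norm_num) j : Fin 4), (0 : ℕ)))).toRingHom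

/-! ### Auxiliary lemmas -/

/-- Clairaut: partial derivatives commute. -/
lemma pderiv_comm' {σ : Type*} [DecidableEq σ] (i j : σ) (f : MvPolynomial σ ℝ) :
    pderiv i (pderiv j f) = pderiv j (pderiv i f) := by
  induction f using MvPolynomial.induction_on' with
  | add p q hp hq => simp [map_add, hp, hq]
  | monomial s a =>
    by_cases h : i = j
    · subst h; rfl
    · have hji : j ≠ i := fun hh => h hh.symm
      have e1 : ((s - Finsupp.single j 1 : _ →₀ ℕ)) i = s i := by
        rw [Finsupp.tsub_apply, Finsupp.single_eq_of_ne h, Nat.sub_zero]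
      have e2 : ((s - Finsupp.single i 1 : _ →₀ ℕ)) j = s j := by
        rw [Finsupp.tsub_apply, Finsupp.single_eq_of_ne hji, Nat.sub_zero]
      have e3 : s - Finsupp.single j 1 - Finsupp.single i 1
          = s - Finsupp.single i 1 - Finsupp.single j 1 := by
        ext k
        simp only [Finsupp.tsub_apply]
        omega
      simp only [pderiv_monomial, e1, e2, e3]
      congr 1
      ring

lemma embQP_inj :
    Function.Injective
      (fun j : Fin 2 => ((Fin.castLE (by norm_num) j : Fin 4), (0 : ℕ))) := by
  intro a b h
  have : (Fin.castLE (by norm_num) a : Fin 4) = Fin.castLE (by norm_num) b :=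
    congrArg Prod.fst h
  exact Fin.castLE_injective _ this

lemma pderiv_embQP (j : Fin 2) (F : MvPolynomial (Fin 2) ℝ) :
    pderiv ((Fin.castLE (by norm_num) j : Fin 4), (0 : ℕ)) (embQP F)
      = embQP (pderiv j F) :=
  pderiv_rename embQP_inj j F

lemma pderiv_embQP0 (F : MvPolynomial (Fin 2) ℝ) :
    pderiv ((0 : Fin 4), (0 : ℕ)) (embQP F) = embQP (pderiv 0 F) :=
  pderiv_embQP 0 F

lemma pderiv_embQP1 (F : MvPolynomial (Fin 2) ℝ) :
    pderiv ((1 : Fin 4), (0 : ℕ)) (embQP F) = embQP (pderiv 1 F) :=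
  pderiv_embQP 1 F

lemma pderiv_embQP_ne (v : MVar) (hv0 : v ≠ ((0 : Fin 4), 0))
    (hv1 : v ≠ ((1 : Fin 4), 0)) (F : MvPolynomial (Fin 2) ℝ) :
    pderiv v (embQP F) = 0 := by
  apply pderiv_eq_zero_of_notMem_vars
  intro h
  obtain ⟨j, -, rfl⟩ := Finset.mem_image.mp (vars_rename _ _ h)
  fin_cases j
  · exact hv0 rfl
  · exact hv1 rfl

lemma gOf_embQP (F : MvPolynomial (Fin 2) ℝ) :
    gOf (embQP F) =
      embQP (pderiv 0 F) * X ((3 : Fin 4), 0)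
        - embQP (pderiv 1 F) * X ((2 : Fin 4), 0) := by
  rw [gOf, pderiv_embQP0, pderiv_embQP1]

lemma Dt_zero : Dt 0 = 0 := by simp [Dt]

lemma Dt_iter_zero (j : ℕ) : Dt^[j] 0 = 0 := Function.iterate_fixed Dt_zero j

lemma ELm_of_order0 (fam : Fin 4) (g : MLoc)
    (h : ∀ j : ℕ, j ≠ 0 → pderiv (fam, j) g = 0) :
    ELm fam g = pderiv (fam, 0) g := by
  rw [ELm, finsum_eq_single _ 0 (fun j hj => by rw [h j hj, Dt_iter_zero, smul_zero])]
  simp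

lemma pderiv_gOf_high (F : MvPolynomial (Fin 2) ℝ) (fam : Fin 4) (j : ℕ)
    (hj : j ≠ 0) : pderiv (fam, j) (gOf (embQP F)) = 0 := by
  have h0 : ((fam, j) : MVar) ≠ ((0 : Fin 4), 0) := by
    intro h; exact hj (congrArg Prod.snd h)
  have h1 : ((fam, j) : MVar) ≠ ((1 : Fin 4), 0) := by
    intro h; exact hj (congrArg Prod.snd h)
  have hx2 : (((2 : Fin 4), 0) : MVar) ≠ (fam, j) := by
    intro h; exact hj (congrArg Prod.snd h).symm
  have hx3 : (((3 : Fin 4), 0) : MVar) ≠ (fam, j) := by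
    intro h; exact hj (congrArg Prod.snd h).symm
  rw [gOf_embQP, map_sub, pderiv_mul, pderiv_mul,
    pderiv_embQP_ne _ h0 h1, pderiv_embQP_ne _ h0 h1,
    pderiv_X_of_ne hx2, pderiv_X_of_ne hx3]
  ring

lemma ELm_gOf (F : MvPolynomial (Fin 2) ℝ) (fam : Fin 4) :
    ELm fam (gOf (embQP F)) = pderiv (fam, 0) (gOf (embQP F)) :=
  ELm_of_order0 fam _ (pderiv_gOf_high F fam)

lemma pderiv00_gOf (F : MvPolynomial (Fin 2) ℝ) :
    pderiv ((0 : Fin 4), 0) (gOf (embQP F)) =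
      embQP (pderiv 0 (pderiv 0 F)) * X ((3 : Fin 4), 0)
        - embQP (pderiv 0 (pderiv 1 F)) * X ((2 : Fin 4), 0) := by
  rw [gOf_embQP, map_sub, pderiv_mul, pderiv_mul, pderiv_embQP0, pderiv_embQP0,
    pderiv_X_of_ne (by decide), pderiv_X_of_ne (by decide)]
  ring

lemma pderiv10_gOf (F : MvPolynomial (Fin 2) ℝ) :
    pderiv ((1 : Fin 4), 0) (gOf (embQP F)) =
      embQP (pderiv 1 (pderiv 0 F)) * X ((3 : Fin 4), 0)
        - embQP (pderiv 1 (pderiv 1 F)) * X ((2 : Fin 4), 0) := by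
  rw [gOf_embQP, map_sub, pderiv_mul, pderiv_mul, pderiv_embQP1, pderiv_embQP1,
    pderiv_X_of_ne (by decide), pderiv_X_of_ne (by decide)]
  ring

lemma pderiv20_gOf (F : MvPolynomial (Fin 2) ℝ) :
    pderiv ((2 : Fin 4), 0) (gOf (embQP F)) = -embQP (pderiv 1 F) := by
  rw [gOf_embQP, map_sub, pderiv_mul, pderiv_mul,
    pderiv_embQP_ne _ (by decide) (by decide),
    pderiv_embQP_ne _ (by decide) (by decide),
    pderiv_X_of_ne (by decide), pderiv_X_self]
  ring

lemma pderiv30_gOf (F : MvPolynomial (Fin 2) ℝ) :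
    pderiv ((3 : Fin 4), 0) (gOf (embQP F)) = embQP (pderiv 0 F) := by
  rw [gOf_embQP, map_sub, pderiv_mul, pderiv_mul,
    pderiv_embQP_ne _ (by decide) (by decide),
    pderiv_embQP_ne _ (by decide) (by decide),
    pderiv_X_self, pderiv_X_of_ne (by decide)]
  ring

theorem stmt10 (F1 F2 : MvPolynomial (Fin 2) ℝ) :
    antibrkt (gOf (embQP F1)) (gOf (embQP F2)) =
      gOf (pbr (embQP F1) (embQP F2)) := by
  unfold antibrkt
  rw [ELm_gOf, ELm_gOf, ELm_gOf, ELm_gOf, ELm_gOf, ELm_gOf, ELm_gOf, ELm_gOf,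
    pderiv00_gOf, pderiv00_gOf, pderiv10_gOf, pderiv10_gOf,
    pderiv20_gOf, pderiv20_gOf, pderiv30_gOf, pderiv30_gOf,
    pbr, pderiv_embQP0, pderiv_embQP1, pderiv_embQP1, pderiv_embQP0,
    ← map_mul, ← map_mul, ← map_sub, gOf_embQP]
  simp only [map_sub, map_add, map_mul, pderiv_mul]
  rw [pderiv_comm' (1 : Fin 2) 0 F1, pderiv_comm' (1 : Fin 2) 0 F2]
  ring
end

section
/- Let (Ω^{p,g}, d_H, δ) be a bicomplex with anticommuting differentials d_H (horizontal, form degree +1) and δ (Koszul-Tate, ghost number +1), with δ acyclic in negative ghost numbers (H^g(δ) = 0 for g < 0) and d_H acyclic in form degrees 0 < p < n (after removing constants). Then the map f([a]) = [j] sending a ghost-number −1, form-degree n cocycle of δ modulo d_H (i.e., δa + d_H j = 0) to its descent partner j is a well-defined isomorphism H^{-1,n}(δ|d_H) ≅ H^{0,n-1}(d_H|δ). -/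
/-!
A cocycle relation `δ a + d_H j = 0` lets a coboundary on one side be traded for one on the
other. If `a = δ m + d_H m'`, then `δ² = 0` and anticommutativity give `d_H (j - δ m') = 0`,
and exactness of `d_H` in the intermediate degree `n - 1` writes `j - δ m'` as `d_H c`.
Transposing the bicomplex exchanges the roles of `δ` and `d_H`, so the converse follows in
the same way from the acyclicity of `δ` in ghost number `-1`. Surjectivity is immediate:
if `d_H j = δ b`, then `a = -b` is a preimage.
-/

section Zigzag

variable {M M' C A J B : Type*} [AddCommGroup M] [AddCommGroup M'] [AddCommGroup C]
  [AddCommGroup A] [AddCommGroup J] [AddCommGroup B]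
  (f₀ : M →+ A) (h₀ : M' →+ A) (k₀ : M' →+ J) (g₀ : C →+ J) (f₁ : A →+ B) (g₁ : J →+ B)

/-- In the bicomplex, `f₀, k₀, f₁` are pieces of `δ` and `h₀, g₀, g₁` pieces of `d_H`. -/
theorem exists_eq_add_of_exact_of_anticomm (hff : ∀ x, f₁ (f₀ x) = 0)
    (hanti : ∀ x, f₁ (h₀ x) + g₁ (k₀ x) = 0) (hexact : ∀ x, g₁ x = 0 → ∃ y, x = g₀ y)
    {a : A} {j : J} (h : f₁ a + g₁ j = 0) {m : M} {m' : M'} (ha : a = f₀ m + h₀ m') :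
    ∃ c, j = g₀ c + k₀ m' := by
  have hcycle : g₁ (j - k₀ m') = 0 := by
    have hf₁a : f₁ a = -g₁ (k₀ m') := by
      rw [ha, map_add, hff, zero_add, eq_neg_of_add_eq_zero_left (hanti m')]
    rw [map_sub, eq_neg_of_add_eq_zero_right h, hf₁a, neg_neg, sub_self]
  obtain ⟨c, hc⟩ := hexact _ hcycle
  exact ⟨c, by rw [← hc, sub_add_cancel]⟩

end Zigzag

theorem stmt11
    (Ω : ℤ → ℤ → Type) [∀ g p, AddCommGroup (Ω g p)]
    (dH : ∀ g p, Ω g p →+ Ω g (p + 1))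
    (δ : ∀ g p, Ω g p →+ Ω (g + 1) p)
    (hdd : ∀ g p (x : Ω g p), dH g (p + 1) (dH g p x) = 0)
    (hδδ : ∀ g p (x : Ω g p), δ (g + 1) p (δ g p x) = 0)
    (hanti : ∀ g p (x : Ω g p),
      δ g (p + 1) (dH g p x) + dH (g + 1) p (δ g p x) = 0)
    (γ p₀ : ℤ) (hγ : γ = -2) (hp : 0 < p₀ + 1)
    (hδacyc : ∀ g p, g + 1 < 0 → ∀ x : Ω (g + 1) p,
      δ (g + 1) p x = 0 → ∃ y : Ω g p, x = δ g p y)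
    (hdHacyc : ∀ g p, 0 < p + 1 → p + 1 < p₀ + 1 + 1 → ∀ x : Ω g (p + 1),
      dH g (p + 1) x = 0 → ∃ y : Ω g p, x = dH g p y) :
    -- surjectivity: every `d_H|δ`-cocycle `j` lifts to a pair `(a, j)`
    (∀ j : Ω (γ + 1 + 1) (p₀ + 1),
      (∃ b : Ω (γ + 1) (p₀ + 1 + 1),
        dH (γ + 1 + 1) (p₀ + 1) j = δ (γ + 1) (p₀ + 1 + 1) b) →
      ∃ a : Ω (γ + 1) (p₀ + 1 + 1),
        δ (γ + 1) (p₀ + 1 + 1) a + dH (γ + 1 + 1) (p₀ + 1) j = 0) ∧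
    -- well-definedness and injectivity: `a - a'` is trivial iff `j - j'` is
    (∀ (a a' : Ω (γ + 1) (p₀ + 1 + 1)) (j j' : Ω (γ + 1 + 1) (p₀ + 1)),
      δ (γ + 1) (p₀ + 1 + 1) a + dH (γ + 1 + 1) (p₀ + 1) j = 0 →
      δ (γ + 1) (p₀ + 1 + 1) a' + dH (γ + 1 + 1) (p₀ + 1) j' = 0 →
      ((∃ (m : Ω γ (p₀ + 1 + 1)) (m' : Ω (γ + 1) (p₀ + 1)),
          a - a' = δ γ (p₀ + 1 + 1) m + dH (γ + 1) (p₀ + 1) m') ↔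
        (∃ (c : Ω (γ + 1 + 1) p₀) (c' : Ω (γ + 1) (p₀ + 1)),
          j - j' = dH (γ + 1 + 1) p₀ c + δ (γ + 1) (p₀ + 1) c'))) := by
  refine ⟨fun j ⟨b, hb⟩ ↦ ⟨-b, by rw [map_neg, hb, neg_add_cancel]⟩, ?_⟩
  intro a a' j j' ha ha'
  have hsub : δ (γ + 1) (p₀ + 1 + 1) (a - a') + dH (γ + 1 + 1) (p₀ + 1) (j - j') = 0 := by
    rw [map_sub, map_sub, sub_add_sub_comm, ha, ha', sub_zero]
  have hdHexact := hdHacyc (γ + 1 + 1) p₀ hp (by omega)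
  have hδexact := hδacyc γ (p₀ + 1 + 1) (by omega)
  constructor
  · rintro ⟨m, m', hm⟩
    obtain ⟨c, hc⟩ := exists_eq_add_of_exact_of_anticomm _ _ _ _ _ _ (hδδ γ _)
      (hanti (γ + 1) (p₀ + 1)) hdHexact hsub hm
    exact ⟨c, m', hc⟩
  · rintro ⟨c, c', hc⟩
    obtain ⟨m, hm⟩ := exists_eq_add_of_exact_of_anticomm _ _ _ _ _ _ (hdd (γ + 1 + 1) p₀)
      (fun x ↦ (add_comm _ _).trans (hanti (γ + 1) (p₀ + 1) x)) hδexact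
      ((add_comm _ _).trans hsub) hc
    exact ⟨m, c', hm⟩
end

section
/- In a non-degenerate field theory with Koszul-Tate differential δ and horizontal differential d_H, the antibracket induced on H^{-1,n}(δ|d_H), computed on representatives a_i = u^*_a X^a_i ν via {a_1, a_2} = [(δ(u^*_a X^a_1)/δu^b) X^b_2 − (δ(u^*_a X^a_2)/δu^b) X^b_1] ν, equals u^*_a [X_2, X_1]^a ν, where [X_2, X_1]^a = D_I(X^b_2)(∂X^a_1/∂u^b_I) − D_I(X^b_1)(∂X^a_2/∂u^b_I) is the Lie bracket of the corresponding evolutionary vector fields. -/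
/-!
STATEMENT 13.  Non-degenerate field theory.  For two ghost-number `-1`
cocycles `a_i = u*_a X^a_i ν` (with `X^a_i` local functions of the fields),
the antibracket computed on representatives,
`{a1, a2} = [(δ(u*_a X^a_1)/δu^b) X^b_2 - (δ(u*_a X^a_2)/δu^b) X^b_1] ν`
(Euler–Lagrange derivatives treating the antifields as additional dependent
variables), equals `u*_a [X2, X1]^a ν` up to a `d_H`-exact `n`-form, where
`[X2, X1]^a = D_I(X^b_2) ∂X^a_1/∂u^b_I - D_I(X^b_1) ∂X^a_2/∂u^b_I`
is the Lie bracket of the corresponding evolutionary vector fields.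
-/

open MvPolynomial

/-- Variables: base coordinates `x^i`, jet coordinates `u^a_I` (left), and
antifield jet coordinates `u*_{aI}` (right). -/
abbrev AVar (n k : ℕ) :=
  Fin n ⊕ ((Fin k × Multiset (Fin n)) ⊕ (Fin k × Multiset (Fin n)))

/-- Local functions in the fields, the antifields and their derivatives. -/
abbrev ALoc (n k : ℕ) := MvPolynomial (AVar n k) ℝ

/-- The field variable `u^a_I`. -/
noncomputable def uJet {n k : ℕ} (a : Fin k) (I : Multiset (Fin n)) :
    ALoc n k := X (Sum.inr (Sum.inl (a, I)))

/-- The antifield variable `u*_{aI}`. -/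
noncomputable def uStar {n k : ℕ} (a : Fin k) (I : Multiset (Fin n)) :
    ALoc n k := X (Sum.inr (Sum.inr (a, I)))

/-- Total derivative `D_i`, extended to the antifields. -/
noncomputable def DtotA {n k : ℕ} (i : Fin n) (f : ALoc n k) : ALoc n k :=
  pderiv (Sum.inl i) f +
    ∑ v ∈ f.vars,
      match v with
      | Sum.inl _ => 0
      | Sum.inr (Sum.inl (a, I)) => uJet a (i ::ₘ I) * pderiv v f
      | Sum.inr (Sum.inr (a, I)) => uStar a (i ::ₘ I) * pderiv v f

/-- Iterated total derivative `D_I`. -/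
noncomputable def DIA {n k : ℕ} (I : Multiset (Fin n)) (f : ALoc n k) :
    ALoc n k :=
  I.toList.foldr DtotA f

/-- Euler–Lagrange derivative with respect to the field `u^a`. -/
noncomputable def ELA {n k : ℕ} (a : Fin k) (f : ALoc n k) : ALoc n k :=
  ∑ᶠ I : Multiset (Fin n),
    ((-1 : ℝ) ^ Multiset.card I) • DIA I (pderiv (Sum.inr (Sum.inl (a, I))) f)

/-- The Koszul–Tate differential of the Lagrangian `L0`:
`δ u*_{aI} = D_I (δL0/δu^a)`, `δ x = δ u^a_I = 0`. -/
noncomputable def KT {n k : ℕ} (L0 : ALoc n k) (f : ALoc n k) : ALoc n k :=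
  ∑ v ∈ f.vars,
    match v with
    | Sum.inr (Sum.inr (a, I)) => DIA I (ELA a L0) * pderiv v f
    | _ => 0

/-- Total divergence. -/
noncomputable def DivA {n k : ℕ} (R : Fin n → ALoc n k) : ALoc n k :=
  ∑ i, DtotA i (R i)

/-- A local function of the fields alone (no antifield dependence). -/
def FieldOnly {n k : ℕ} (f : ALoc n k) : Prop :=
  ∀ (a : Fin k) (I : Multiset (Fin n)), pderiv (Sum.inr (Sum.inr (a, I))) f = 0

/-- `true` on antifield variables. -/
def isStarVar {n k : ℕ} : AVar n k → Bool
  | Sum.inr (Sum.inr _) => true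
  | _ => false

/-- A polynomial that is (homogeneous) linear in the antifields. -/
def AfLinear {n k : ℕ} (f : ALoc n k) : Prop :=
  ∀ m ∈ f.support, (∑ v ∈ m.support.filter (fun v => isStarVar v = true), m v) = 1

/-- Lie bracket of evolutionary vector fields:
`[X, Y]^a = D_I(X^b) ∂Y^a/∂u^b_I - D_I(Y^b) ∂X^a/∂u^b_I`. -/
noncomputable def evBracket {n k : ℕ} (Xv Yv : Fin k → ALoc n k) (a : Fin k) :
    ALoc n k :=
  ∑ b, ∑ᶠ I : Multiset (Fin n),
    (DIA I (Xv b) * pderiv (Sum.inr (Sum.inl (b, I))) (Yv a) -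
      DIA I (Yv b) * pderiv (Sum.inr (Sum.inl (b, I))) (Xv a))

namespace Stmt13Aux

open MvPolynomial

variable {n k : ℕ}

/-- The value of the total derivative on a generator. -/
noncomputable def gen (i : Fin n) : AVar n k → ALoc n k
  | Sum.inl m => if m = i then 1 else 0
  | Sum.inr (Sum.inl (a, I)) => uJet a (i ::ₘ I)
  | Sum.inr (Sum.inr (a, I)) => uStar a (i ::ₘ I)

/-- The total derivative as a bona fide derivation. -/
noncomputable def Dd (i : Fin n) : Derivation ℝ (ALoc n k) (ALoc n k) :=
  mkDerivation ℝ (gen i)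

lemma supp_fin (f : ALoc n k) (g : AVar n k → ALoc n k → ALoc n k)
    (hg : ∀ v, g v 0 = 0) :
    (Function.support fun v => g v (pderiv v f)).Finite := by
  apply Set.Finite.subset f.vars.finite_toSet
  intro v hv
  simp only [Function.mem_support] at hv
  by_contra h
  rw [pderiv_eq_zero_of_notMem_vars (by simpa using h), hg] at hv
  exact hv rfl

lemma derivation_apply (D : Derivation ℝ (ALoc n k) (ALoc n k)) (f : ALoc n k) :
    D f = ∑ᶠ v, pderiv v f * D (X v) := by
  induction f using MvPolynomial.induction_on with
  | C a => simp [derivation_C]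
  | add p q hp hq =>
      rw [map_add, hp, hq,
        ← finsum_add_distrib (supp_fin p (fun v x => x * D (X v)) (by simp))
          (supp_fin q (fun v x => x * D (X v)) (by simp))]
      refine finsum_congr fun v => ?_
      rw [map_add, add_mul]
  | mul_X p m hp =>
      classical
      rw [Derivation.leibniz, smul_eq_mul, smul_eq_mul, hp, mul_comm (X m)]
      have h1 : (∑ᶠ v, pderiv v p * D (X v)) * X m
          = ∑ᶠ v, pderiv v p * X m * D (X v) := by
        rw [finsum_mul _ _]
        exact finsum_congr fun v => by ring
      have h2 : (p * D (X m)) = ∑ᶠ v, p * pderiv v (X m : ALoc n k) * D (X v) := by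
        rw [finsum_eq_single _ m (fun v hv => by
          rw [pderiv_X_of_ne (Ne.symm hv)]; ring)]
        rw [pderiv_X_self]; ring
      have hf1 : (Function.support fun v => (pderiv v) p * X m * D (X v)).Finite :=
        supp_fin p (fun v x => x * X m * D (X v)) (by simp)
      have hf2 : (Function.support fun v => p * (pderiv v) (X m : ALoc n k) * D (X v)).Finite := by
        apply Set.Finite.subset (Set.finite_singleton m)
        intro v hv
        simp only [Function.mem_support] at hv
        by_contra h
        rw [pderiv_X_of_ne (by simpa using Ne.symm h)] at hv
        simp at hv
      rw [h1, h2, ← finsum_add_distrib hf2 hf1]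
      refine finsum_congr fun v => ?_
      rw [pderiv_mul]
      ring

lemma DtotA_eq (i : Fin n) (f : ALoc n k) : DtotA i f = Dd i f := by
  classical
  rw [derivation_apply]
  have hX : ∀ v, Dd (n := n) (k := k) i (X v) = gen i v := fun v =>
    mkDerivation_X ℝ (gen i) v
  have hsub : (Function.support fun v => pderiv v f * Dd i (X v))
      ⊆ ↑(insert (Sum.inl i) f.vars) := by
    intro v hv
    simp only [Function.mem_support] at hv
    simp only [Finset.coe_insert, Set.mem_insert_iff, Finset.mem_coe]
    by_contra h
    push_neg at h
    rw [pderiv_eq_zero_of_notMem_vars h.2] at hv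
    simp at hv
  rw [finsum_eq_finset_sum_of_support_subset _ hsub]
  rw [← Finset.add_sum_erase _ _ (Finset.mem_insert_self (Sum.inl i) f.vars)]
  rw [Finset.erase_insert_eq_erase]
  unfold DtotA
  congr 1
  · rw [hX]; show _ = pderiv (Sum.inl i) f * gen i (Sum.inl i)
    simp [gen]
  · rw [← Finset.sum_erase f.vars (a := Sum.inl i) (by simp)]
    refine Finset.sum_congr rfl fun v hv => ?_
    have hvne : v ≠ Sum.inl i := Finset.ne_of_mem_erase hv
    rw [hX]
    match v with
    | Sum.inl m =>
        have : m ≠ i := fun h => hvne (by rw [h])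
        simp [gen, this]
    | Sum.inr (Sum.inl (a, I)) => show _ * _ = _; rw [gen]; ring
    | Sum.inr (Sum.inr (a, I)) => show _ * _ = _; rw [gen]; ring

lemma DtotA_zero (i : Fin n) : DtotA i (0 : ALoc n k) = 0 := by
  rw [DtotA_eq]; exact map_zero _

lemma DtotA_add (i : Fin n) (f g : ALoc n k) :
    DtotA i (f + g) = DtotA i f + DtotA i g := by
  simp only [DtotA_eq]; exact map_add _ _ _

lemma DtotA_smul (i : Fin n) (r : ℝ) (f : ALoc n k) :
    DtotA i (r • f) = r • DtotA i f := by
  simp only [DtotA_eq]; exact (Dd i).map_smul r f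

lemma DtotA_neg (i : Fin n) (f : ALoc n k) : DtotA i (-f) = -DtotA i f := by
  simp only [DtotA_eq]; exact map_neg (Dd i).toLinearMap f

lemma DtotA_mul (i : Fin n) (f g : ALoc n k) :
    DtotA i (f * g) = DtotA i f * g + f * DtotA i g := by
  simp only [DtotA_eq, Derivation.leibniz, smul_eq_mul]
  ring

lemma DtotA_X_comm (i j : Fin n) (v : AVar n k) :
    DtotA i (DtotA j (X v)) = DtotA j (DtotA i (X v)) := by
  have hX : ∀ (i : Fin n) (v : AVar n k), DtotA i (X v) = gen i v := fun i v => by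
    rw [DtotA_eq]; exact mkDerivation_X ℝ (gen i) v
  rw [hX, hX]
  match v with
  | Sum.inl m =>
      simp only [gen]
      split <;> split <;>
        simp [DtotA_eq, Derivation.map_one_eq_zero, map_zero]
  | Sum.inr (Sum.inl (a, I)) =>
      simp only [gen, uJet, hX]
      rw [show (i ::ₘ j ::ₘ I) = (j ::ₘ i ::ₘ I) from Multiset.cons_swap i j I]
  | Sum.inr (Sum.inr (a, I)) =>
      simp only [gen, uStar, hX]
      rw [show (i ::ₘ j ::ₘ I) = (j ::ₘ i ::ₘ I) from Multiset.cons_swap i j I]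

lemma DtotA_comm (i j : Fin n) (f : ALoc n k) :
    DtotA i (DtotA j f) = DtotA j (DtotA i f) := by
  induction f using MvPolynomial.induction_on with
  | C a =>
      have : ∀ (t : Fin n), DtotA t (C a : ALoc n k) = 0 := fun t => by
        rw [DtotA_eq]; exact derivation_C _ a
      rw [this, this, DtotA_zero, DtotA_zero]
  | add p q hp hq => rw [DtotA_add, DtotA_add, DtotA_add, DtotA_add, hp, hq]
  | mul_X p m hp =>
      rw [DtotA_mul, DtotA_add, DtotA_mul, DtotA_mul,
        DtotA_mul, DtotA_add, DtotA_mul, DtotA_mul, hp, DtotA_X_comm]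
      ring

instance : LeftCommutative (DtotA (n := n) (k := k)) := ⟨DtotA_comm⟩

lemma DIA_nil (f : ALoc n k) : DIA 0 f = f := by
  unfold DIA
  rw [Multiset.toList_zero]
  rfl

lemma DIA_cons (i : Fin n) (I : Multiset (Fin n)) (f : ALoc n k) :
    DIA (i ::ₘ I) f = DtotA i (DIA I f) := by
  unfold DIA
  have hperm : List.Perm (i ::ₘ I).toList (i :: I.toList) := by
    rw [← Multiset.coe_eq_coe]
    rw [Multiset.coe_toList, ← Multiset.cons_coe, Multiset.coe_toList]
  rw [hperm.foldr_eq]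
  rfl

lemma DIA_zero_fn (I : Multiset (Fin n)) : DIA I (0 : ALoc n k) = 0 := by
  induction I using Multiset.induction_on with
  | empty => rw [DIA_nil]
  | cons i I ih => rw [DIA_cons, ih, DtotA_zero]

lemma DIA_Dtot_comm (I : Multiset (Fin n)) (i : Fin n) (f : ALoc n k) :
    DIA I (DtotA i f) = DtotA i (DIA I f) := by
  induction I using Multiset.induction_on with
  | empty => rw [DIA_nil, DIA_nil]
  | cons j I ih => rw [DIA_cons, DIA_cons, ih, DtotA_comm]

/-- One-component vector field. -/
noncomputable def sing (i : Fin n) (h : ALoc n k) : Fin n → ALoc n k :=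
  fun j => if j = i then h else 0

lemma DivA_sing (i : Fin n) (h : ALoc n k) : DivA (sing i h) = DtotA i h := by
  unfold DivA sing
  rw [Finset.sum_eq_single i]
  · simp
  · intro j _ hj
    simp [hj, DtotA_zero]
  · simp

lemma DivA_zero : DivA (0 : Fin n → ALoc n k) = 0 := by
  unfold DivA
  simp [DtotA_zero]

lemma DivA_add (R R' : Fin n → ALoc n k) : DivA (R + R') = DivA R + DivA R' := by
  unfold DivA
  rw [← Finset.sum_add_distrib]
  refine Finset.sum_congr rfl fun i _ => ?_
  simp [DtotA_add]

lemma DivA_neg (R : Fin n → ALoc n k) : DivA (-R) = -DivA R := by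
  unfold DivA
  rw [← Finset.sum_neg_distrib]
  refine Finset.sum_congr rfl fun i _ => ?_
  simp [DtotA_neg]

lemma DivA_sub (R R' : Fin n → ALoc n k) : DivA (R - R') = DivA R - DivA R' := by
  rw [sub_eq_add_neg, DivA_add, DivA_neg, sub_eq_add_neg]

lemma DivA_smul (r : ℝ) (R : Fin n → ALoc n k) : DivA (r • R) = r • DivA R := by
  unfold DivA
  rw [Finset.smul_sum]
  refine Finset.sum_congr rfl fun i _ => ?_
  simp [DtotA_smul]

/-- Integration by parts. -/
lemma ibp (I : Multiset (Fin n)) (f g : ALoc n k) :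
    ∃ R : Fin n → ALoc n k,
      DIA I f * g = ((-1 : ℝ) ^ Multiset.card I) • (f * DIA I g) + DivA R := by
  induction I using Multiset.induction_on generalizing g with
  | empty =>
      refine ⟨0, ?_⟩
      rw [DIA_nil, DIA_nil, DivA_zero]
      simp
  | cons i I ih =>
      obtain ⟨R', hR'⟩ := ih (DtotA i g)
      refine ⟨sing i (DIA I f * g) - R', ?_⟩
      rw [DivA_sub, DivA_sing]
      have hleib : DtotA i (DIA I f * g)
          = DtotA i (DIA I f) * g + DIA I f * DtotA i g := DtotA_mul i _ _
      have : DtotA i (DIA I f) * g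
          = DtotA i (DIA I f * g) - DIA I f * DtotA i g := by
        rw [hleib]; ring
      rw [DIA_cons, this, hR', DIA_cons]
      rw [DIA_Dtot_comm]
      rw [Multiset.card_cons, pow_succ]
      module

lemma exists_div_sum {α : Type*} {s : Finset α} {f g : α → ALoc n k}
    (h : ∀ x ∈ s, ∃ R : Fin n → ALoc n k, f x = g x + DivA R) :
    ∃ R : Fin n → ALoc n k, ∑ x ∈ s, f x = ∑ x ∈ s, g x + DivA R := by
  classical
  induction s using Finset.induction_on with
  | empty => exact ⟨0, by simp [DivA_zero]⟩
  | @insert a s has ih =>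
      obtain ⟨R1, h1⟩ := h a (Finset.mem_insert_self a s)
      obtain ⟨R2, h2⟩ := ih fun x hx => h x (Finset.mem_insert_of_mem hx)
      refine ⟨R1 + R2, ?_⟩
      rw [Finset.sum_insert has, Finset.sum_insert has, h1, h2, DivA_add]
      ring

end Stmt13Aux
theorem stmt13 (n k : ℕ)
    (X1 X2 : Fin k → ALoc n k)
    (h1 : ∀ a, FieldOnly (X1 a)) (h2 : ∀ a, FieldOnly (X2 a)) :
    ∃ R : Fin n → ALoc n k,
      ∑ b, (ELA b (∑ a, uStar a 0 * X1 a) * X2 b -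
          ELA b (∑ a, uStar a 0 * X2 a) * X1 b) =
        ∑ a, uStar a 0 * evBracket X2 X1 a + DivA R := by
  classical
  open Stmt13Aux in
  -- the finite set of relevant multi-indices
  set jets : ALoc n k → Finset (Multiset (Fin n)) := fun f =>
    f.vars.image (fun v => match v with
      | Sum.inr (Sum.inl (_, I)) => I
      | _ => 0) with hjets
  set T : Finset (Multiset (Fin n)) :=
    Finset.univ.biUnion (fun a => jets (X1 a) ∪ jets (X2 a)) with hTdef
  have hT1 : ∀ (b : Fin k) (I : Multiset (Fin n)) (a : Fin k),
      pderiv (Sum.inr (Sum.inl (b, I))) (X1 a) ≠ 0 → I ∈ T := by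
    intro b I a hne
    have hv : (Sum.inr (Sum.inl (b, I)) : AVar n k) ∈ (X1 a).vars := by
      by_contra h
      exact hne (pderiv_eq_zero_of_notMem_vars h)
    refine Finset.mem_biUnion.mpr ⟨a, Finset.mem_univ a, ?_⟩
    exact Finset.mem_union_left _ (Finset.mem_image.mpr ⟨_, hv, rfl⟩)
  have hT2 : ∀ (b : Fin k) (I : Multiset (Fin n)) (a : Fin k),
      pderiv (Sum.inr (Sum.inl (b, I))) (X2 a) ≠ 0 → I ∈ T := by
    intro b I a hne
    have hv : (Sum.inr (Sum.inl (b, I)) : AVar n k) ∈ (X2 a).vars := by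
      by_contra h
      exact hne (pderiv_eq_zero_of_notMem_vars h)
    refine Finset.mem_biUnion.mpr ⟨a, Finset.mem_univ a, ?_⟩
    exact Finset.mem_union_right _ (Finset.mem_image.mpr ⟨_, hv, rfl⟩)
  -- partial derivatives of the cocycles
  have hpd : ∀ (Xf : Fin k → ALoc n k) (b : Fin k) (I : Multiset (Fin n)),
      pderiv (Sum.inr (Sum.inl (b, I))) (∑ a, uStar a 0 * Xf a)
        = ∑ a, uStar a 0 * pderiv (Sum.inr (Sum.inl (b, I))) (Xf a) := by
    intro Xf b I
    rw [map_sum]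
    refine Finset.sum_congr rfl fun a _ => ?_
    rw [pderiv_mul,
      show (pderiv (Sum.inr (Sum.inl (b, I)))) (uStar (n:=n) a 0) = 0 from
        pderiv_X_of_ne (by simp), zero_mul, zero_add]
  -- Euler–Lagrange derivatives as finite sums over T
  have hELA : ∀ (Xf : Fin k → ALoc n k)
      (hXf : ∀ b I a, pderiv (Sum.inr (Sum.inl (b, I))) (Xf a) ≠ 0 → I ∈ T)
      (b : Fin k),
      ELA b (∑ a, uStar a 0 * Xf a) = ∑ I ∈ T, ((-1 : ℝ) ^ Multiset.card I) •
        DIA I (∑ a, uStar a 0 * pderiv (Sum.inr (Sum.inl (b, I))) (Xf a)) := by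
    intro Xf hXf b
    unfold ELA
    rw [finsum_eq_finset_sum_of_support_subset]
    · exact Finset.sum_congr rfl fun I _ => by rw [hpd]
    · intro I hI
      simp only [Function.mem_support] at hI
      simp only [Finset.mem_coe]
      have hd : pderiv (Sum.inr (Sum.inl (b, I))) (∑ a, uStar a 0 * Xf a) ≠ 0 := by
        intro h0
        rw [h0, DIA_zero_fn, smul_zero] at hI
        exact hI rfl
      rw [hpd] at hd
      obtain ⟨a, _, ha⟩ := Finset.exists_ne_zero_of_sum_ne_zero hd
      refine hXf b I a fun h0 => ha ?_
      rw [h0, mul_zero]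
  -- the bracket as a finite sum over T
  have hEv : ∀ a : Fin k, evBracket X2 X1 a
      = ∑ b, ∑ I ∈ T,
        (DIA I (X2 b) * pderiv (Sum.inr (Sum.inl (b, I))) (X1 a) -
          DIA I (X1 b) * pderiv (Sum.inr (Sum.inl (b, I))) (X2 a)) := by
    intro a
    unfold evBracket
    refine Finset.sum_congr rfl fun b _ => ?_
    rw [finsum_eq_finset_sum_of_support_subset]
    intro I hI
    simp only [Function.mem_support] at hI
    simp only [Finset.mem_coe]
    by_contra hIT
    have e1 : pderiv (Sum.inr (Sum.inl (b, I))) (X1 a) = 0 := by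
      by_contra h; exact hIT (hT1 b I a h)
    have e2 : pderiv (Sum.inr (Sum.inl (b, I))) (X2 a) = 0 := by
      by_contra h; exact hIT (hT2 b I a h)
    rw [e1, e2, mul_zero, mul_zero, sub_zero] at hI
    exact hI rfl
  -- abbreviations
  set P1 : Fin k → Multiset (Fin n) → ALoc n k := fun b I =>
    ∑ a, uStar a 0 * pderiv (Sum.inr (Sum.inl (b, I))) (X1 a) with hP1
  set P2 : Fin k → Multiset (Fin n) → ALoc n k := fun b I =>
    ∑ a, uStar a 0 * pderiv (Sum.inr (Sum.inl (b, I))) (X2 a) with hP2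
  -- the main computation
  have main : ∃ R : Fin n → ALoc n k,
      ∑ b, (ELA b (∑ a, uStar a 0 * X1 a) * X2 b -
          ELA b (∑ a, uStar a 0 * X2 a) * X1 b)
        = ∑ b, ∑ I ∈ T,
            (P1 b I * DIA I (X2 b) - P2 b I * DIA I (X1 b)) + DivA R := by
    apply exists_div_sum
    intro b _
    rw [hELA X1 hT1 b, hELA X2 hT2 b, Finset.sum_mul, Finset.sum_mul,
      ← Finset.sum_sub_distrib]
    apply exists_div_sum
    intro I _
    obtain ⟨Ra, ha⟩ := ibp I (P1 b I) (X2 b)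
    obtain ⟨Rb, hb⟩ := ibp I (P2 b I) (X1 b)
    refine ⟨((-1 : ℝ) ^ Multiset.card I) • (Ra - Rb), ?_⟩
    have hcc : ∀ x : ALoc n k,
        ((-1 : ℝ) ^ Multiset.card I) • ((-1 : ℝ) ^ Multiset.card I) • x = x := by
      intro x
      rw [smul_smul, ← pow_add, Even.neg_one_pow ⟨Multiset.card I, rfl⟩, one_smul]
    rw [smul_mul_assoc, smul_mul_assoc, ha, hb, smul_add, smul_add, hcc, hcc,
      DivA_smul, DivA_sub, smul_sub]
    ring
  -- matching the bracket term
  have hrhs : ∑ a, uStar a 0 * evBracket X2 X1 a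
      = ∑ b, ∑ I ∈ T, (P1 b I * DIA I (X2 b) - P2 b I * DIA I (X1 b)) := by
    have e1 : ∀ a : Fin k, uStar (n := n) a 0 * evBracket X2 X1 a
        = ∑ b, ∑ I ∈ T, uStar a 0 *
            (DIA I (X2 b) * pderiv (Sum.inr (Sum.inl (b, I))) (X1 a) -
              DIA I (X1 b) * pderiv (Sum.inr (Sum.inl (b, I))) (X2 a)) := by
      intro a
      rw [hEv a, Finset.mul_sum]
      exact Finset.sum_congr rfl fun b _ => Finset.mul_sum ..
    rw [Finset.sum_congr rfl fun a _ => e1 a, Finset.sum_comm]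
    refine Finset.sum_congr rfl fun b _ => ?_
    rw [Finset.sum_comm]
    refine Finset.sum_congr rfl fun I _ => ?_
    simp only [hP1, hP2, Finset.sum_mul, mul_sub, ← Finset.sum_sub_distrib]
    exact Finset.sum_congr rfl fun a _ => by ring
  obtain ⟨R, hR⟩ := main
  refine ⟨R, ?_⟩
  rw [hR, hrhs]
end

section
/- Let s = l̂_1 + l̂_2 + l̂_3 + ... be a degree −1 coderivation on the graded symmetric coalgebra ΛsX_* with l̂_k of resolution degree k−2, satisfying the relations I_l = Σ_{i+j=l+1} l̂_i l̂_j = 0 for all l ≤ k where k ≥ 3. Then the graded Jacobi identity [s,[s,s]] = 0 at resolution degree k implies [l̂_1, l̂_2 l̂_k + l̂_3 l̂_{k-1} + ... + l̂_k l̂_2] = 0, i.e., the obstruction to extending the structure one step further is a cocycle for the adjoint action of l̂_1 on coderivations. -/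
/-!
Write `s = Σ tⁱ l̂ᵢ` as a series graded by resolution degree. Then `I_l` is the coefficient of
`s²`, and `[s, [s, s]] = 2 (s · s² - s² · s) = 0` is just associativity. In resolution degree `k`
all terms `[l̂ᵢ, I_{k+2-i}]` with `i ≥ 2` vanish by hypothesis, leaving `[l̂₁, I_{k+1}] = 0`.
Since `I_{k+1} = l̂₁ l̂_{k+1} + S + l̂_{k+1} l̂₁` and `l̂₁² = I₁ = 0`, the outer terms commute with
`l̂₁`, hence so does `S`.
-/

open Finset

section

variable {A : Type*} [Ring A] (L : ℕ → A)

/-- The paper's `I_l`, a homogeneous component of `s² = ½[s, s]`. -/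
def sqComponent (l : ℕ) : A := ∑ i ∈ Icc 1 l, L i * L (l + 1 - i)

theorem sum_mul_sqComponent_eq_sum_sqComponent_mul (n : ℕ) :
    ∑ i ∈ Icc 1 (n + 1), L i * sqComponent L (n + 2 - i) =
      ∑ i ∈ Icc 1 (n + 1), sqComponent L (n + 2 - i) * L i := by
  -- Both sides sum `L a * L b * L c` over `a + b + c = n + 3` with `a, b, c ≥ 1`.
  simp only [sqComponent, mul_sum, sum_mul, sum_sigma']
  refine sum_nbij' (fun p => ⟨n + 3 - p.1 - p.2, p.1⟩) (fun p => ⟨p.2, n + 3 - p.1 - p.2⟩)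
    ?_ ?_ ?_ ?_ ?_ <;> rintro ⟨i, m⟩ h <;> simp only [mem_sigma, mem_Icc] at h ⊢
  · omega
  · omega
  · congr 1; omega
  · congr 1; omega
  · rw [mul_assoc]; congr 3 <;> omega

theorem commute_sqComponent_succ_of_sqComponent_eq_zero {k : ℕ}
    (hI : ∀ l, 1 ≤ l → l ≤ k → sqComponent L l = 0) :
    Commute (L 1) (sqComponent L (k + 1)) := by
  have hjacobi := sum_mul_sqComponent_eq_sum_sqComponent_mul L k
  have hsplit : Icc 1 (k + 1) = insert 1 (Icc 2 (k + 1)) := by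
    ext i; simp only [mem_Icc, mem_insert]; omega
  have hvanish : ∀ i ∈ Icc 2 (k + 1), sqComponent L (k + 2 - i) = 0 := fun i hi => by
    rw [mem_Icc] at hi; exact hI _ (by omega) (by omega)
  have hleft : ∑ i ∈ Icc 2 (k + 1), L i * sqComponent L (k + 2 - i) = 0 :=
    sum_eq_zero fun i hi => by rw [hvanish i hi, mul_zero]
  have hright : ∑ i ∈ Icc 2 (k + 1), sqComponent L (k + 2 - i) * L i = 0 :=
    sum_eq_zero fun i hi => by rw [hvanish i hi, zero_mul]
  rw [hsplit, sum_insert (by simp), sum_insert (by simp), hleft, hright, add_zero, add_zero]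
    at hjacobi
  exact hjacobi

theorem sqComponent_succ {k : ℕ} (hk : 1 ≤ k) :
    sqComponent L (k + 1) =
      L 1 * L (k + 1) + ∑ i ∈ Icc 2 k, L i * L (k + 2 - i) + L (k + 1) * L 1 := by
  have hsplit : Icc 1 (k + 1) = insert 1 (insert (k + 1) (Icc 2 k)) := by
    ext i; simp only [mem_Icc, mem_insert]; omega
  rw [sqComponent, hsplit, sum_insert (by simp; omega), sum_insert (by simp),
    Nat.add_sub_cancel, Nat.add_sub_cancel_left, add_comm (L (k + 1) * L 1), ← add_assoc]

end

theorem Commute.of_mul_add_add_mul_of_mul_self_eq_zero {R : Type*} [Ring R] {a b c : R}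
    (ha : a * a = 0) (h : Commute a (a * b + c + b * a)) : Commute a c := by
  rw [commute_iff_eq, ← sub_eq_zero]
  calc a * c - c * a
      = a * (a * b + c + b * a) - (a * b + c + b * a) * a - a * a * b + b * (a * a) := by
        noncomm_ring
    _ = 0 := by rw [h.eq, ha, sub_self, zero_mul, mul_zero, sub_zero, add_zero]

theorem stmt15
    (A : Type) [Ring A] (L : ℕ → A) (k : ℕ) (hk : 3 ≤ k)
    (hI : ∀ l : ℕ, 1 ≤ l → l ≤ k →
      ∑ i ∈ Finset.Icc 1 l, L i * L (l + 1 - i) = 0) :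
    L 1 * (∑ i ∈ Finset.Icc 2 k, L i * L (k + 2 - i))
      - (∑ i ∈ Finset.Icc 2 k, L i * L (k + 2 - i)) * L 1 = 0 := by
  have hsq : L 1 * L 1 = 0 := by simpa using hI 1 le_rfl (by omega)
  have hcomm := commute_sqComponent_succ_of_sqComponent_eq_zero L hI
  rw [sqComponent_succ L (by omega)] at hcomm
  exact sub_eq_zero.mpr (hcomm.of_mul_add_add_mul_of_mul_self_eq_zero hsq).eq
end
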